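/- arXiv:2408.08557 — 9 statements merged into one kernel-verified Lean document; each statement's English description precedes it below -/
import Mathlib

section
/- Let τ₁ be the translation from PTL×S5 formulae to SLTL formulae that is the identity on propositional variables, is homomorphic for Boolean connectives and the temporal connectives X and U, and replaces every occurrence of ◇ by ◇_* and every occurrence of □ by □_*. Then a PTL×S5 formula φ is PTL×S5-satisfiable if and only if τ₁(φ) is SLTL-satisfiable. -/
/-! ### SLTL: syntax, models, satisfaction -/

inductive SForm : Type where
  | var : ℕ → SForm
  | le : ℕ → ℕ → SForm
  | tru : SForm
  | fls : SForm
  | neg : SForm → SForm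
  | conj : SForm → SForm → SForm
  | dia : ℕ → SForm → SForm
  | box : ℕ → SForm → SForm
  | next : SForm → SForm
  | until_ : SForm → SForm → SForm

/-- Traces: ω-sequences of propositional valuations. -/
abbrev Trace := ℕ → Set ℕ

/-- An SLTL model `(Π, λ)`; standpoint symbols are natural numbers, `0` is the
universal standpoint `*`. -/
structure SLTLModel where
  Pi : Set Trace
  lam : ℕ → Set Trace
  pi_nonempty : Pi.Nonempty
  lam_sub : ∀ s, lam s ⊆ Pi
  lam_nonempty : ∀ s, (lam s).Nonempty
  lam_star : lam 0 = Pi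

def SSat (M : SLTLModel) : SForm → Trace → ℕ → Prop
  | .var p, σ, i => p ∈ σ i
  | .le s s', _, _ => M.lam s ⊆ M.lam s'
  | .tru, _, _ => True
  | .fls, _, _ => False
  | .neg a, σ, i => ¬ SSat M a σ i
  | .conj a b, σ, i => SSat M a σ i ∧ SSat M b σ i
  | .dia s a, _, i => ∃ σ' ∈ M.lam s, SSat M a σ' i
  | .box s a, _, i => ∀ σ' ∈ M.lam s, SSat M a σ' i
  | .next a, σ, i => SSat M a σ (i + 1)
  | .until_ a b, σ, i =>
      ∃ i', i ≤ i' ∧ SSat M b σ i' ∧ ∀ i'', i ≤ i'' → i'' < i' → SSat M a σ i''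

def SLTLSatisfiable (φ : SForm) : Prop :=
  ∃ M : SLTLModel, ∃ σ ∈ M.Pi, SSat M φ σ 0

def SForm.impl (a b : SForm) : SForm := .neg (.conj a (.neg b))
def SForm.iffc (a b : SForm) : SForm := .conj (a.impl b) (b.impl a)
/-- `G φ := ¬(⊤ U ¬φ)`. -/
def SForm.G (a : SForm) : SForm := .neg (.until_ .tru (.neg a))
def bigAnd (l : List SForm) : SForm := l.foldr .conj .tru
/-- The list `[a, a+1, …, b]`. -/
def listIcc (a b : ℕ) : List ℕ := (List.range (b + 1 - a)).map (fun k => a + k)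

/-- Propositional variables occurring in a formula. -/
def varsSF : SForm → Finset ℕ
  | .var p => {p}
  | .le _ _ => ∅
  | .tru => ∅
  | .fls => ∅
  | .neg a => varsSF a
  | .conj a b => varsSF a ∪ varsSF b
  | .dia _ a => varsSF a
  | .box _ a => varsSF a
  | .next a => varsSF a
  | .until_ a b => varsSF a ∪ varsSF b

/-- Standpoint symbols occurring in a formula. -/
def standsSF : SForm → Finset ℕ
  | .var _ => ∅
  | .le s s' => {s, s'}
  | .tru => ∅
  | .fls => ∅
  | .neg a => standsSF a
  | .conj a b => standsSF a ∪ standsSF b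
  | .dia s a => insert s (standsSF a)
  | .box s a => insert s (standsSF a)
  | .next a => standsSF a
  | .until_ a b => standsSF a ∪ standsSF b

/-- No temporal connective (`X` or `U`) occurs in the formula. -/
def noTemp : SForm → Prop
  | .neg a => noTemp a
  | .conj a b => noTemp a ∧ noTemp b
  | .dia _ a => noTemp a
  | .box _ a => noTemp a
  | .next _ => False
  | .until_ _ _ => False
  | _ => True

/-- The fragment LTL∨PSL: no temporal connective occurs within the scope of a
standpoint modality. -/
def isLTLPSL : SForm → Prop
  | .neg a => isLTLPSL a
  | .conj a b => isLTLPSL a ∧ isLTLPSL b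
  | .dia _ a => noTemp a
  | .box _ a => noTemp a
  | .next a => isLTLPSL a
  | .until_ a b => isLTLPSL a ∧ isLTLPSL b
  | _ => True

def sizeSF : SForm → ℕ
  | .var _ => 1
  | .le _ _ => 1
  | .tru => 1
  | .fls => 1
  | .neg a => sizeSF a + 1
  | .conj a b => sizeSF a + sizeSF b + 1
  | .dia _ a => sizeSF a + 1
  | .box _ a => sizeSF a + 1
  | .next a => sizeSF a + 1
  | .until_ a b => sizeSF a + sizeSF b + 1

/-! ### PTL×S5: syntax, models, satisfaction -/

inductive PForm (V : Type) : Type where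
  | var : V → PForm V
  | tru : PForm V
  | fls : PForm V
  | neg : PForm V → PForm V
  | conj : PForm V → PForm V → PForm V
  | dia : PForm V → PForm V
  | box : PForm V → PForm V
  | next : PForm V → PForm V
  | until_ : PForm V → PForm V → PForm V

/-- Satisfaction in a PTL×S5 model `(ℕ × W, L)`. -/
def PSat {V W : Type} (L : ℕ → W → Set V) : PForm V → ℕ → W → Prop
  | .var p, n, w => p ∈ L n w
  | .tru, _, _ => True
  | .fls, _, _ => False
  | .neg a, n, w => ¬ PSat L a n w
  | .conj a b, n, w => PSat L a n w ∧ PSat L b n w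
  | .dia a, n, _ => ∃ w', PSat L a n w'
  | .box a, n, _ => ∀ w', PSat L a n w'
  | .next a, n, w => PSat L a (n + 1) w
  | .until_ a b, n, w =>
      ∃ n', n ≤ n' ∧ PSat L b n' w ∧ ∀ n'', n ≤ n'' → n'' < n' → PSat L a n'' w

def PSatisfiable {V : Type} (φ : PForm V) : Prop :=
  ∃ (W : Type) (_ : Nonempty W) (L : ℕ → W → Set V) (w : W), PSat L φ 0 w

def PForm.impl {V : Type} (a b : PForm V) : PForm V := .neg (.conj a (.neg b))
def PForm.disj {V : Type} (a b : PForm V) : PForm V := .neg (.conj (.neg a) (.neg b))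
/-- `G φ := ¬(⊤ U ¬φ)`. -/
def PForm.G {V : Type} (a : PForm V) : PForm V := .neg (.until_ .tru (.neg a))
def bigAndP {V : Type} (l : List (PForm V)) : PForm V := l.foldr .conj .tru

/-- The translation `τ₁` from PTL×S5 formulae to SLTL formulae: identity on
propositional variables, homomorphic on Boolean and temporal connectives,
`◇ ↦ ◇_*` and `□ ↦ □_*` (the universal standpoint `*` is `0`). -/
def tau1 : PForm ℕ → SForm
  | .var p => .var p
  | .tru => .tru
  | .fls => .fls
  | .neg a => .neg (tau1 a)
  | .conj a b => .conj (tau1 a) (tau1 b)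
  | .dia a => .dia 0 (tau1 a)
  | .box a => .box 0 (tau1 a)
  | .next a => .next (tau1 a)
  | .until_ a b => .until_ (tau1 a) (tau1 b)

/-- From a PTL×S5 model, the induced SLTL model whose traces are the worlds. -/
def modelOf {W : Type} (hW : Nonempty W) (L : ℕ → W → Set ℕ) : SLTLModel where
  Pi := Set.range (fun w : W => (fun n => L n w : Trace))
  lam := fun _ => Set.range (fun w : W => (fun n => L n w : Trace))
  pi_nonempty := Set.range_nonempty _
  lam_sub := fun _ => le_refl _
  lam_nonempty := fun _ => Set.range_nonempty _
  lam_star := rfl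

lemma fwd_sat {W : Type} (hW : Nonempty W) (L : ℕ → W → Set ℕ) (a : PForm ℕ) :
    ∀ n w, PSat L a n w ↔ SSat (modelOf hW L) (tau1 a) (fun n => L n w) n := by
  induction a with
  | var p => intro n w; rfl
  | tru => intro n w; exact Iff.rfl
  | fls => intro n w; exact Iff.rfl
  | neg a ih => intro n w; exact not_congr (ih n w)
  | conj a b iha ihb => intro n w; exact and_congr (iha n w) (ihb n w)
  | dia a ih =>
      intro n w
      constructor
      · rintro ⟨w', hw'⟩
        exact ⟨fun n => L n w', ⟨w', rfl⟩, (ih n w').1 hw'⟩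
      · rintro ⟨σ', ⟨w', rfl⟩, hs⟩
        exact ⟨w', (ih n w').2 hs⟩
  | box a ih =>
      intro n w
      constructor
      · rintro h σ' ⟨w', rfl⟩
        exact (ih n w').1 (h w')
      · intro h w'
        exact (ih n w').2 (h _ ⟨w', rfl⟩)
  | next a ih => intro n w; exact ih (n + 1) w
  | until_ a b iha ihb =>
      intro n w
      constructor
      · rintro ⟨n', h1, h2, h3⟩
        exact ⟨n', h1, (ihb n' w).1 h2, fun m hm1 hm2 => (iha m w).1 (h3 m hm1 hm2)⟩
      · rintro ⟨n', h1, h2, h3⟩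
        exact ⟨n', h1, (ihb n' w).2 h2, fun m hm1 hm2 => (iha m w).2 (h3 m hm1 hm2)⟩

lemma bwd_sat (M : SLTLModel) (a : PForm ℕ) :
    ∀ n (σ : M.Pi), SSat M (tau1 a) σ.1 n ↔
      PSat (fun n (σ : M.Pi) => σ.1 n) a n σ := by
  induction a with
  | var p => intro n σ; rfl
  | tru => intro n σ; exact Iff.rfl
  | fls => intro n σ; exact Iff.rfl
  | neg a ih => intro n σ; exact not_congr (ih n σ)
  | conj a b iha ihb => intro n σ; exact and_congr (iha n σ) (ihb n σ)
  | dia a ih =>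
      intro n σ
      constructor
      · rintro ⟨σ', hσ', hs⟩
        rw [M.lam_star] at hσ'
        exact ⟨⟨σ', hσ'⟩, (ih n ⟨σ', hσ'⟩).1 hs⟩
      · rintro ⟨σ', hs⟩
        refine ⟨σ'.1, ?_, (ih n σ').2 hs⟩
        rw [M.lam_star]; exact σ'.2
  | box a ih =>
      intro n σ
      constructor
      · intro h σ'
        have h2 : σ'.1 ∈ M.lam 0 := by rw [M.lam_star]; exact σ'.2
        exact (ih n σ').1 (h σ'.1 h2)
      · intro h σ' hσ'
        rw [M.lam_star] at hσ'
        exact (ih n ⟨σ', hσ'⟩).2 (h ⟨σ', hσ'⟩)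
  | next a ih => intro n σ; exact ih (n + 1) σ
  | until_ a b iha ihb =>
      intro n σ
      constructor
      · rintro ⟨n', h1, h2, h3⟩
        exact ⟨n', h1, (ihb n' σ).1 h2, fun m hm1 hm2 => (iha m σ).1 (h3 m hm1 hm2)⟩
      · rintro ⟨n', h1, h2, h3⟩
        exact ⟨n', h1, (ihb n' σ).2 h2, fun m hm1 hm2 => (iha m σ).2 (h3 m hm1 hm2)⟩

/-- A PTL×S5 formula `φ` is PTL×S5-satisfiable iff `τ₁(φ)` is
SLTL-satisfiable. -/
theorem stmt0 (φ : PForm ℕ) : PSatisfiable φ ↔ SLTLSatisfiable (tau1 φ) := by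
  constructor
  · rintro ⟨W, hW, L, w, hw⟩
    exact ⟨modelOf hW L, fun n => L n w, ⟨w, rfl⟩, (fwd_sat hW L φ 0 w).1 hw⟩
  · rintro ⟨M, σ, hσ, hs⟩
    exact ⟨M.Pi, ⟨⟨σ, hσ⟩⟩, fun n σ => σ.1 n, ⟨σ, hσ⟩,
      (bwd_sat M φ 0 ⟨σ, hσ⟩).1 hs⟩
end

section
/- Let φ be an LTL∨PSL formula and let I be the set of subformulae of φ of the form s ≼ s'. Then φ is SLTL-satisfiable if and only if there exists a partition D = (I⁺, I⁻) of I such that the formula φ_D is SLTL-satisfiable. -/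
/-! ### The formula `φ_D` for a partition `D = (I⁺, I⁻)` of the `≼`-subformulae -/

/-- The pairs `(s, s')` such that `s ≼ s'` is a subformula of the given formula. -/
def leSubs : SForm → Finset (ℕ × ℕ)
  | .var _ => ∅
  | .le s s' => {(s, s')}
  | .tru => ∅
  | .fls => ∅
  | .neg a => leSubs a
  | .conj a b => leSubs a ∪ leSubs b
  | .dia _ a => leSubs a
  | .box _ a => leSubs a
  | .next a => leSubs a
  | .until_ a b => leSubs a ∪ leSubs b

/-- `φ[I⁺ ↦ ⊤, I⁻ ↦ ⊥]`: replace each subformula `s ≼ s'` with `(s,s') ∈ P`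
by `⊤` and each with `(s,s') ∈ N` by `⊥`. -/
def substLe (P N : Finset (ℕ × ℕ)) : SForm → SForm
  | .var p => .var p
  | .le s s' => if (s, s') ∈ P then .tru else if (s, s') ∈ N then .fls else .le s s'
  | .tru => .tru
  | .fls => .fls
  | .neg a => .neg (substLe P N a)
  | .conj a b => .conj (substLe P N a) (substLe P N b)
  | .dia s a => .dia s (substLe P N a)
  | .box s a => .box s (substLe P N a)
  | .next a => .next (substLe P N a)
  | .until_ a b => .until_ (substLe P N a) (substLe P N b)

/-- `ψ_D := G( ⋀_{(s≼s')∈I⁺} (s ≼ s') ∧ ⋀_{(s≼s')∈I⁻} (◇_s p_{s,s'} ∧ ¬◇_{s'} p_{s,s'}) )`,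
where `pv (s,s')` is the fresh variable `p_{s,s'}`. -/
noncomputable def psiD (P N : Finset (ℕ × ℕ)) (pv : ℕ × ℕ → ℕ) : SForm :=
  SForm.G (.conj
    (bigAnd (P.toList.map (fun pr => SForm.le pr.1 pr.2)))
    (bigAnd (N.toList.map (fun pr =>
      SForm.conj (.dia pr.1 (.var (pv pr))) (.neg (.dia pr.2 (.var (pv pr))))))))

/-- `φ_D := φ[I⁺ ↦ ⊤, I⁻ ↦ ⊥] ∧ ψ_D`. -/
noncomputable def phiD (φ : SForm) (P N : Finset (ℕ × ℕ)) (pv : ℕ × ℕ → ℕ) : SForm :=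
  .conj (substLe P N φ) (psiD P N pv)

/-!
An inclusion `s ≼ s'` is rigid: its truth depends on the model only, not on the trace or the
time point. So in a fixed model the partition `D` of `I` into true and false inclusions can be
read off, and replacing every `≼`-atom of `φ` by its truth value changes nothing; conversely
`ψ_D` forces exactly the inclusions of `I⁺` and the non-inclusions of `I⁻`, so the same
replacement recovers `φ` from `φ_D`.

What remains is to make `ψ_D` true. For each `(s, s') ∈ I⁻` pick a witness trace in
`λ(s) \ λ(s')` and redefine the fresh variable `p_{s,s'}` to hold, at every time, on that
witness only. This map on traces may identify traces, which could change the truth of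
`≼`-atoms, but `φ[I⁺ ↦ ⊤, I⁻ ↦ ⊥]` has none left and does not mention the fresh variables.
-/

theorem SSat_bigAnd (M : SLTLModel) (l : List SForm) (σ : Trace) (i : ℕ) :
    SSat M (bigAnd l) σ i ↔ ∀ a ∈ l, SSat M a σ i := by
  induction l with
  | nil => simp [bigAnd, SSat]
  | cons a l ih => simp only [bigAnd, List.foldr_cons, SSat, List.forall_mem_cons] at ih ⊢; rw [ih]

theorem SSat_G (M : SLTLModel) (a : SForm) (σ : Trace) (i : ℕ) :
    SSat M a.G σ i ↔ ∀ j, i ≤ j → SSat M a σ j := by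
  simp [SForm.G, SSat]

theorem SSat_psiD (M : SLTLModel) (P N : Finset (ℕ × ℕ)) (pv : ℕ × ℕ → ℕ) (σ : Trace) (i : ℕ) :
    SSat M (psiD P N pv) σ i ↔ ∀ j, i ≤ j → (∀ pr ∈ P, M.lam pr.1 ⊆ M.lam pr.2) ∧
      ∀ pr ∈ N, (∃ τ ∈ M.lam pr.1, pv pr ∈ τ j) ∧ ¬∃ τ ∈ M.lam pr.2, pv pr ∈ τ j := by
  simp only [psiD, SSat_G, SSat, SSat_bigAnd, List.forall_mem_map, Finset.mem_toList]

theorem separates_of_SSat_psiD {M : SLTLModel} {P N : Finset (ℕ × ℕ)} {pv : ℕ × ℕ → ℕ}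
    {σ : Trace} {i : ℕ} (h : SSat M (psiD P N pv) σ i) :
    (∀ pr ∈ P, M.lam pr.1 ⊆ M.lam pr.2) ∧ ∀ pr ∈ N, ¬M.lam pr.1 ⊆ M.lam pr.2 := by
  obtain ⟨hP, hN⟩ := (SSat_psiD M P N pv σ i).1 h i le_rfl
  refine ⟨hP, fun pr hpr hsub => ?_⟩
  obtain ⟨⟨τ, hτ, hp⟩, hnot⟩ := hN pr hpr
  exact hnot ⟨τ, hsub hτ, hp⟩

section substLe

variable {P N : Finset (ℕ × ℕ)}

theorem varsSF_substLe (a : SForm) : varsSF (substLe P N a) = varsSF a := by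
  induction a with
  | le s s' => simp only [substLe]; split_ifs <;> rfl
  | _ => simp_all [substLe, varsSF]

theorem leSubs_substLe_eq_empty {a : SForm} (hcover : leSubs a ⊆ P ∪ N) :
    leSubs (substLe P N a) = ∅ := by
  induction a with
  | le s s' =>
    have hmem : (s, s') ∈ P ∪ N := hcover (Finset.mem_singleton_self _)
    simp only [substLe]
    split_ifs with hP hN
    · rfl
    · rfl
    · simp_all
  | _ => simp_all [substLe, leSubs, Finset.union_subset_iff]

theorem SSat_substLe {M : SLTLModel} (hP : ∀ pr ∈ P, M.lam pr.1 ⊆ M.lam pr.2)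
    (hN : ∀ pr ∈ N, ¬M.lam pr.1 ⊆ M.lam pr.2) {a : SForm} (hcover : leSubs a ⊆ P ∪ N)
    (τ : Trace) (i : ℕ) : SSat M (substLe P N a) τ i ↔ SSat M a τ i := by
  induction a generalizing τ i with
  | le s s' =>
    by_cases hs : (s, s') ∈ P
    · simp [substLe, SSat, hs, hP _ hs]
    · have hn : (s, s') ∈ N := (Finset.mem_union.1 (hcover (Finset.mem_singleton_self _))).resolve_left hs
      simp [substLe, SSat, hs, hn, hN _ hn]
  | _ => simp_all [substLe, SSat, leSubs, Finset.union_subset_iff]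

end substLe

def SLTLModel.map (M : SLTLModel) (f : Trace → Trace) : SLTLModel where
  Pi := f '' M.Pi
  lam s := f '' M.lam s
  pi_nonempty := M.pi_nonempty.image f
  lam_sub s := Set.image_mono (M.lam_sub s)
  lam_nonempty s := (M.lam_nonempty s).image f
  lam_star := congrArg (f '' ·) M.lam_star

@[simp]
theorem SLTLModel.map_lam (M : SLTLModel) (f : Trace → Trace) (s : ℕ) :
    (M.map f).lam s = f '' M.lam s := rfl

theorem SSat_map (M : SLTLModel) (f : Trace → Trace) {a : SForm}
    (hvars : ∀ p ∈ varsSF a, ∀ τ i, p ∈ f τ i ↔ p ∈ τ i) (hle : leSubs a = ∅)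
    (τ : Trace) (i : ℕ) : SSat (M.map f) a (f τ) i ↔ SSat M a τ i := by
  induction a generalizing τ i with
  | var p => exact hvars p (Finset.mem_singleton_self p) τ i
  | le s s' => simp [leSubs] at hle
  | _ => simp_all [SSat, varsSF, leSubs]

section markWitnesses

variable {ι : Type*} (pv : ι → ℕ) (N : Set ι) (w : ι → Trace)

def markWitnesses (τ : Trace) : Trace :=
  fun i => (τ i \ Set.range pv) ∪ pv '' {x | x ∈ N ∧ τ = w x}

variable {pv N w}

theorem mem_markWitnesses_of_notMem_range {p : ℕ} (hp : p ∉ Set.range pv) (τ : Trace) (i : ℕ) :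
    p ∈ markWitnesses pv N w τ i ↔ p ∈ τ i := by
  simp only [markWitnesses, Set.mem_union, Set.mem_sdiff, hp, not_false_eq_true, and_true,
    or_iff_left_iff_imp]
  rintro ⟨x, -, rfl⟩
  exact absurd ⟨x, rfl⟩ hp

theorem apply_mem_markWitnesses (hinj : Function.Injective pv) {x : ι} {τ : Trace} {i : ℕ} :
    pv x ∈ markWitnesses pv N w τ i ↔ x ∈ N ∧ τ = w x := by
  simp [markWitnesses, hinj.mem_set_image]

end markWitnesses

theorem exists_map_SSat_psiD (M : SLTLModel) {P N : Finset (ℕ × ℕ)} {pv : ℕ × ℕ → ℕ}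
    (hinj : Function.Injective pv) (hP : ∀ pr ∈ P, M.lam pr.1 ⊆ M.lam pr.2)
    (hN : ∀ pr ∈ N, ¬M.lam pr.1 ⊆ M.lam pr.2) :
    ∃ f : Trace → Trace, (∀ p ∉ Set.range pv, ∀ τ i, p ∈ f τ i ↔ p ∈ τ i) ∧
      ∀ σ i, SSat (M.map f) (psiD P N pv) σ i := by
  choose! w hw using fun pr hpr => Set.not_subset.1 (hN pr hpr)
  refine ⟨markWitnesses pv {pr | pr ∈ N} w, fun p hp => mem_markWitnesses_of_notMem_range hp,
    fun σ i => (SSat_psiD _ _ _ _ σ i).2 fun j _ => ⟨fun pr hpr => ?_, fun pr hpr => ⟨?_, ?_⟩⟩⟩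
  · exact Set.image_mono (hP pr hpr)
  · exact ⟨_, Set.mem_image_of_mem _ (hw pr hpr).1, apply_mem_markWitnesses hinj |>.2 ⟨hpr, rfl⟩⟩
  · rintro ⟨_, ⟨τ, hτ, rfl⟩, hmem⟩
    obtain ⟨-, rfl⟩ := (apply_mem_markWitnesses hinj).1 hmem
    exact (hw pr hpr).2 hτ

theorem stmt3_general (φ : SForm) (pv : ℕ × ℕ → ℕ)
    (hinj : Function.Injective pv) (hfresh : ∀ pr, pv pr ∉ varsSF φ) :
    SLTLSatisfiable φ ↔
      ∃ P N : Finset (ℕ × ℕ), P ∪ N = leSubs φ ∧ Disjoint P N ∧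
        SLTLSatisfiable (phiD φ P N pv) := by
  classical
  constructor
  · rintro ⟨M, σ, hσ, hsat⟩
    set P := (leSubs φ).filter fun pr => M.lam pr.1 ⊆ M.lam pr.2
    set N := (leSubs φ).filter fun pr => ¬M.lam pr.1 ⊆ M.lam pr.2
    have hPN : P ∪ N = leSubs φ := Finset.filter_union_filter_not_eq _ _
    have hP : ∀ pr ∈ P, M.lam pr.1 ⊆ M.lam pr.2 := fun _ h => (Finset.mem_filter.1 h).2
    have hN : ∀ pr ∈ N, ¬M.lam pr.1 ⊆ M.lam pr.2 := fun _ h => (Finset.mem_filter.1 h).2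
    obtain ⟨f, hf, hψ⟩ := exists_map_SSat_psiD M hinj hP hN
    have hvars : ∀ p ∈ varsSF (substLe P N φ), ∀ τ i, p ∈ f τ i ↔ p ∈ τ i := by
      rintro p hp
      refine hf p ?_
      rintro ⟨pr, rfl⟩
      exact hfresh pr (varsSF_substLe φ ▸ hp)
    refine ⟨P, N, hPN, Finset.disjoint_filter_filter_not _ _ _, M.map f, f σ,
      Set.mem_image_of_mem f hσ, ?_, hψ _ _⟩
    rw [SSat_map M f hvars (leSubs_substLe_eq_empty hPN.ge), SSat_substLe hP hN hPN.ge]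
    exact hsat
  · rintro ⟨P, N, hPN, -, M, σ, hσ, hsubst, hψ⟩
    obtain ⟨hP, hN⟩ := separates_of_SSat_psiD hψ
    exact ⟨M, σ, hσ, (SSat_substLe hP hN hPN.ge σ 0).1 hsubst⟩

/-- An LTL∨PSL formula `φ` is SLTL-satisfiable iff there is a
partition `D = (I⁺, I⁻)` of the set `I` of subformulae of `φ` of the form
`s ≼ s'` such that `φ_D` is SLTL-satisfiable (the variables `p_{s,s'}` are
fresh and pairwise distinct). -/
theorem stmt3 (φ : SForm) (pv : ℕ × ℕ → ℕ) (hφ : isLTLPSL φ)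
    (hinj : Function.Injective pv) (hfresh : ∀ pr, pv pr ∉ varsSF φ) :
    SLTLSatisfiable φ ↔
      ∃ P N : Finset (ℕ × ℕ), P ∪ N = leSubs φ ∧ Disjoint P N ∧
        SLTLSatisfiable (phiD φ P N pv) :=
  stmt3_general φ pv hinj hfresh
end

section
/- Let φ be an LTL∨PSL formula, D = (I⁺, I⁻) a partition of the set I of subformulae of φ of the form s ≼ s', and A_{φ_D} the generalised nondeterministic Büchi automaton associated with φ_D. If φ_D is SLTL-satisfiable, then the language of A_{φ_D} is non-empty. -/
/-! ### The closure, s-elementary sets, and the generalised Büchi automaton -/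

/-- Subformulae of a formula. -/
def subfs : SForm → Set SForm
  | .var p => {SForm.var p}
  | .le s s' => {SForm.le s s'}
  | .tru => {SForm.tru}
  | .fls => {SForm.fls}
  | .neg a => insert (SForm.neg a) (subfs a)
  | .conj a b => insert (SForm.conj a b) (subfs a ∪ subfs b)
  | .dia s a => insert (SForm.dia s a) (subfs a)
  | .box s a => insert (SForm.box s a) (subfs a)
  | .next a => insert (SForm.next a) (subfs a)
  | .until_ a b => insert (SForm.until_ a b) (subfs a ∪ subfs b)

/-- Negation, identifying `¬¬ψ` with `ψ`. -/
def negId : SForm → SForm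
  | .neg a => a
  | a => .neg a

/-- The closure `cl(φ)`: the smallest set containing all subformulae of `φ`,
`⊤` and `⊥`, closed under negation (identifying `¬¬ψ` with `ψ`), and
containing `X(ψ U ψ')` whenever `ψ U ψ'` is in it. -/
inductive Cl (φ : SForm) : SForm → Prop where
  | base {ψ} : ψ ∈ subfs φ → Cl φ ψ
  | tru : Cl φ .tru
  | fls : Cl φ .fls
  | nc {ψ} : Cl φ ψ → Cl φ (negId ψ)
  | nextU {a b} : Cl φ (.until_ a b) → Cl φ (.next (.until_ a b))

/-- A PSL model with a finite nonempty set `W` of precisifications;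
`Vs` is the valuation on standpoint symbols (with `0` the universal
standpoint `*`) and `Vp` the valuation on propositional variables. -/
structure PSLM (W : Type) where
  Vs : ℕ → Set W
  Vp : ℕ → Set W
  hfin : Finite W
  hne : Nonempty W
  hs : ∀ s, (Vs s).Nonempty
  hstar : Vs 0 = Set.univ

/-- PSL satisfaction of an SLTL formula without temporal connectives
(the clauses for `X` and `U` are never used on PSL formulae). -/
def FSat {W : Type} (M : PSLM W) : SForm → W → Prop
  | .var p, π => π ∈ M.Vp p
  | .le s s', _ => M.Vs s ⊆ M.Vs s'
  | .tru, _ => True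
  | .fls, _ => False
  | .neg a, π => ¬ FSat M a π
  | .conj a b, π => FSat M a π ∧ FSat M b π
  | .dia s a, _ => ∃ π' ∈ M.Vs s, FSat M a π'
  | .box s a, _ => ∀ π' ∈ M.Vs s, FSat M a π'
  | .next _, _ => False
  | .until_ _ _, _ => False

/-- `B` is standpoint-consistent: the conjunction of all PSL formulae in `B`
is PSL-satisfiable. -/
def StandCons (B : Set SForm) : Prop :=
  ∃ (W : Type) (M : PSLM W) (π : W), ∀ ψ ∈ B, noTemp ψ → FSat M ψ π

/-- `B ⊆ cl(φ)` is maximally consistent. -/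
def MaxCons (φ : SForm) (B : Set SForm) : Prop :=
  (∀ ψ ∈ B, Cl φ ψ) ∧ SForm.tru ∈ B ∧ SForm.fls ∉ B ∧
  (∀ ψ, Cl φ (.neg ψ) → (ψ ∈ B ↔ SForm.neg ψ ∉ B)) ∧
  (∀ a b, Cl φ (.conj a b) → (SForm.conj a b ∈ B ↔ a ∈ B ∧ b ∈ B)) ∧
  (∀ a b, Cl φ (.until_ a b) →
    (SForm.until_ a b ∈ B ↔ b ∈ B ∨ (a ∈ B ∧ SForm.next (.until_ a b) ∈ B)))

/-- s-elementary: maximally consistent and standpoint-consistent. -/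
def SElem (φ : SForm) (B : Set SForm) : Prop := MaxCons φ B ∧ StandCons B

/-- `B₀B₁…` is an accepting run of the generalised nondeterministic Büchi
automaton `A_φ` on the word `A₀A₁…`:  `B₀` is initial (`φ ∈ B₀`), every `Bᵢ`
is a state (s-elementary), `Aᵢ = Bᵢ ∩ P(φ)`, consecutive states respect the
transition relation, and every accepting set is visited infinitely often. -/
def AcceptingRun (φ : SForm) (B : ℕ → Set SForm) (A : ℕ → Set ℕ) : Prop :=
  φ ∈ B 0 ∧ (∀ i, SElem φ (B i)) ∧
  (∀ i, A i = {p : ℕ | SForm.var p ∈ B i ∧ p ∈ varsSF φ}) ∧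
  (∀ i ψ, Cl φ (.next ψ) → (SForm.next ψ ∈ B i ↔ ψ ∈ B (i + 1))) ∧
  (∀ a b, Cl φ (.until_ a b) → ∀ i, ∃ j, i ≤ j ∧ (SForm.until_ a b ∉ B j ∨ b ∈ B j))

/-- The language of `A_φ` is non-empty. -/
def LangNonempty (φ : SForm) : Prop :=
  ∃ (B : ℕ → Set SForm) (A : ℕ → Set ℕ), AcceptingRun φ B A

/-!
Along a trace `σ` satisfying `φ`, the sets `Bᵢ` of closure formulae true at `(σ, i)` form an
accepting run: maximal consistency is the semantics of `¬`, `∧` and the one-step unfolding of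
`U`, the `X`-transitions hold by the semantics of `X`, and an eventuality `ψ₁ U ψ₂` true at `i`
is fulfilled at some `j ≥ i`. Standpoint consistency asks for a *finite* PSL model: at time `i`,
identify the traces that satisfy the same variables of `φ` and lie in the same standpoints of
`φ`. There are finitely many such profiles, and no PSL formula over the vocabulary of `φ` can
tell apart two traces with the same profile.
-/

lemma mem_subfs_self (ψ : SForm) : ψ ∈ subfs ψ := by
  cases ψ <;> simp [subfs]

lemma mem_subfs_trans {φ ψ χ : SForm} (hψ : ψ ∈ subfs φ) (hχ : χ ∈ subfs ψ) :
    χ ∈ subfs φ := by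
  induction φ generalizing ψ <;>
    simp only [subfs, Set.mem_insert_iff, Set.mem_union, Set.mem_singleton_iff] at hψ ⊢ <;>
    aesop

lemma varsSF_subset_of_mem_subfs {φ ψ : SForm} (h : ψ ∈ subfs φ) : varsSF ψ ⊆ varsSF φ := by
  induction φ generalizing ψ <;>
    simp only [subfs, Set.mem_insert_iff, Set.mem_union, Set.mem_singleton_iff] at h <;>
    aesop (add norm [varsSF, Finset.subset_iff])

lemma standsSF_subset_of_mem_subfs {φ ψ : SForm} (h : ψ ∈ subfs φ) :
    standsSF ψ ⊆ standsSF φ := by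
  induction φ generalizing ψ <;>
    simp only [subfs, Set.mem_insert_iff, Set.mem_union, Set.mem_singleton_iff] at h <;>
    aesop (add norm [standsSF, Finset.subset_iff])

lemma subfs_negId_subset (ψ : SForm) : subfs (negId ψ) ⊆ insert (negId ψ) (subfs ψ) := by
  cases ψ <;> simp only [negId, subfs] <;> intro χ hχ <;> simp_all

lemma varsSF_negId (ψ : SForm) : varsSF (negId ψ) = varsSF ψ := by
  cases ψ <;> simp [negId, varsSF]

lemma standsSF_negId (ψ : SForm) : standsSF (negId ψ) = standsSF ψ := by
  cases ψ <;> simp [negId, standsSF]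

namespace Cl

variable {φ ψ : SForm}

lemma of_mem_subfs {χ : SForm} (h : Cl φ ψ) (hχ : χ ∈ subfs ψ) : Cl φ χ := by
  induction h generalizing χ with
  | base hψ => exact base (mem_subfs_trans hψ hχ)
  | tru | fls =>
    simp only [subfs, Set.mem_singleton_iff] at hχ
    subst hχ
    first | exact tru | exact fls
  | nc h ih =>
    rcases subfs_negId_subset _ hχ with rfl | hχ
    exacts [nc h, ih hχ]
  | nextU h ih =>
    rcases hχ with rfl | hχ
    exacts [nextU h, ih hχ]

lemma varsSF_subset (h : Cl φ ψ) : varsSF ψ ⊆ varsSF φ := by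
  induction h with
  | base hψ => exact varsSF_subset_of_mem_subfs hψ
  | tru | fls => simp [varsSF]
  | nc _ ih => rwa [varsSF_negId]
  | nextU _ ih => simpa [varsSF] using ih

lemma standsSF_subset (h : Cl φ ψ) : standsSF ψ ⊆ standsSF φ := by
  induction h with
  | base hψ => exact standsSF_subset_of_mem_subfs hψ
  | tru | fls => simp [standsSF]
  | nc _ ih => rwa [standsSF_negId]
  | nextU _ ih => simpa [standsSF] using ih

end Cl

lemma SLTLModel.forall_mem_lam_iff (M : SLTLModel) (s : ℕ) {P : Trace → Prop} :
    (∀ τ : M.Pi, τ.1 ∈ M.lam s → P τ) ↔ ∀ σ ∈ M.lam s, P σ :=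
  ⟨fun h σ hσ => h ⟨σ, M.lam_sub s hσ⟩ hσ, fun h τ => h τ⟩

lemma SLTLModel.exists_mem_lam_iff (M : SLTLModel) (s : ℕ) {P : Trace → Prop} :
    (∃ τ : M.Pi, τ.1 ∈ M.lam s ∧ P τ) ↔ ∃ σ ∈ M.lam s, P σ :=
  ⟨fun ⟨τ, h⟩ => ⟨τ, h⟩, fun ⟨σ, hσ, h⟩ => ⟨⟨σ, M.lam_sub s hσ⟩, hσ, h⟩⟩

lemma sSat_until_iff (M : SLTLModel) (a b : SForm) (σ : Trace) (i : ℕ) :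
    SSat M (.until_ a b) σ i ↔
      SSat M b σ i ∨ (SSat M a σ i ∧ SSat M (.next (.until_ a b)) σ i) := by
  constructor
  · rintro ⟨j, hij, hb, ha⟩
    rcases hij.eq_or_lt with rfl | hij
    · exact Or.inl hb
    · exact Or.inr ⟨ha i le_rfl hij, j, hij, hb, fun k hk => ha k (by omega)⟩
  · rintro (hb | ⟨ha, j, hij, hb, ha'⟩)
    · exact ⟨i, le_rfl, hb, fun k hk hk' => absurd hk' (not_lt.2 hk)⟩
    · refine ⟨j, by omega, hb, fun k hk hkj => ?_⟩
      rcases hk.eq_or_lt with rfl | hk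
      exacts [ha, ha' k hk hkj]

section ProfileModel

variable (M : SLTLModel) (V S : Finset ℕ) (i : ℕ)

def traceProfile (τ : M.Pi) : (V → Prop) × (S → Prop) :=
  (fun p => (p : ℕ) ∈ τ.1 i, fun s => τ.1 ∈ M.lam s)

abbrev ProfileWorld : Type := Set.range (traceProfile M V S i)

def profileWorld : M.Pi → ProfileWorld M V S i := Set.rangeFactorization _

lemma profileWorld_surjective : Function.Surjective (profileWorld M V S i) :=
  Set.rangeFactorization_surjective

def profileModel : PSLM (ProfileWorld M V S i) where
  Vs s := profileWorld M V S i '' {τ | τ.1 ∈ M.lam s}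
  Vp p := profileWorld M V S i '' {τ | p ∈ τ.1 i}
  hfin := inferInstance
  hne := M.pi_nonempty.to_subtype.map (profileWorld M V S i)
  hs s := by
    obtain ⟨τ, hτ⟩ := M.lam_nonempty s
    exact ⟨_, ⟨τ, M.lam_sub s hτ⟩, hτ, rfl⟩
  hstar := by
    simpa [M.lam_star] using (profileWorld_surjective M V S i).range_eq

variable {M V S i}

lemma profileWorld_mem_Vs_iff {s : ℕ} (hs : s ∈ S) (τ : M.Pi) :
    profileWorld M V S i τ ∈ (profileModel M V S i).Vs s ↔ τ.1 ∈ M.lam s := by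
  refine ⟨fun ⟨τ', hτ', heq⟩ => ?_, fun h => ⟨τ, h, rfl⟩⟩
  have := congrFun (congrArg Prod.snd (congrArg Subtype.val heq)) ⟨s, hs⟩
  exact cast this hτ'

lemma profileWorld_mem_Vp_iff {p : ℕ} (hp : p ∈ V) (τ : M.Pi) :
    profileWorld M V S i τ ∈ (profileModel M V S i).Vp p ↔ p ∈ τ.1 i := by
  refine ⟨fun ⟨τ', hτ', heq⟩ => ?_, fun h => ⟨τ, h, rfl⟩⟩
  have := congrFun (congrArg Prod.fst (congrArg Subtype.val heq)) ⟨p, hp⟩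
  exact cast this hτ'

theorem fSat_profileModel_iff {ψ : SForm} (hψ : noTemp ψ) (hV : varsSF ψ ⊆ V)
    (hS : standsSF ψ ⊆ S) (τ : M.Pi) :
    FSat (profileModel M V S i) ψ (profileWorld M V S i τ) ↔ SSat M ψ τ.1 i := by
  have hsurj := profileWorld_surjective M V S i
  induction ψ generalizing τ with
  | var p => exact profileWorld_mem_Vp_iff (hV (by simp [varsSF])) τ
  | le s s' =>
    simp only [standsSF, Finset.insert_subset_iff, Finset.singleton_subset_iff] at hS
    show (profileModel M V S i).Vs s ⊆ (profileModel M V S i).Vs s' ↔ M.lam s ⊆ M.lam s'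
    simp only [Set.subset_def, hsurj.forall, profileWorld_mem_Vs_iff hS.1,
      profileWorld_mem_Vs_iff hS.2]
    exact M.forall_mem_lam_iff s
  | tru | fls => exact Iff.rfl
  | neg a ih => exact not_congr (ih hψ hV hS τ)
  | conj a b iha ihb =>
    simp only [varsSF, standsSF, Finset.union_subset_iff] at hV hS
    exact and_congr (iha hψ.1 hV.1 hS.1 τ) (ihb hψ.2 hV.2 hS.2 τ)
  | dia s a ih =>
    simp only [standsSF, Finset.insert_subset_iff] at hS
    show (∃ w ∈ _, _) ↔ ∃ σ ∈ M.lam s, _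
    simp only [hsurj.exists, profileWorld_mem_Vs_iff hS.1, ih hψ hV hS.2]
    exact M.exists_mem_lam_iff s (P := (SSat M a · i))
  | box s a ih =>
    simp only [standsSF, Finset.insert_subset_iff] at hS
    show (∀ w ∈ _, _) ↔ ∀ σ ∈ M.lam s, _
    simp only [hsurj.forall, profileWorld_mem_Vs_iff hS.1, ih hψ hV hS.2]
    exact M.forall_mem_lam_iff s (P := (SSat M a · i))
  | next | until_ => exact hψ.elim

end ProfileModel

theorem standCons_of_sSat {M : SLTLModel} {σ : Trace} {i : ℕ} {B : Set SForm}
    (V S : Finset ℕ) (hσ : σ ∈ M.Pi)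
    (hB : ∀ ψ ∈ B, varsSF ψ ⊆ V ∧ standsSF ψ ⊆ S ∧ SSat M ψ σ i) : StandCons B :=
  ⟨_, profileModel M V S i, profileWorld M V S i ⟨σ, hσ⟩, fun ψ hψ hψt =>
    let ⟨hV, hS, hsat⟩ := hB ψ hψ
    (fSat_profileModel_iff hψt hV hS ⟨σ, hσ⟩).2 hsat⟩

def satSet (φ : SForm) (M : SLTLModel) (σ : Trace) (i : ℕ) : Set SForm :=
  {ψ | Cl φ ψ ∧ SSat M ψ σ i}

section SatSet

variable {φ : SForm} {M : SLTLModel} {σ : Trace}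

lemma maxCons_satSet (i : ℕ) : MaxCons φ (satSet φ M σ i) := by
  refine ⟨fun ψ hψ => hψ.1, ⟨.tru, trivial⟩, fun h => h.2, ?_, ?_, ?_⟩
  · intro ψ h
    have hψ : Cl φ ψ := h.of_mem_subfs (by simp [subfs, mem_subfs_self])
    simp only [satSet, Set.mem_ofPred_eq, SSat]
    tauto
  · intro a b h
    have ha : Cl φ a := h.of_mem_subfs (by simp [subfs, mem_subfs_self])
    have hb : Cl φ b := h.of_mem_subfs (by simp [subfs, mem_subfs_self])
    simp only [satSet, Set.mem_ofPred_eq, SSat]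
    tauto
  · intro a b h
    have ha : Cl φ a := h.of_mem_subfs (by simp [subfs, mem_subfs_self])
    have hb : Cl φ b := h.of_mem_subfs (by simp [subfs, mem_subfs_self])
    simp only [satSet, Set.mem_ofPred_eq, sSat_until_iff M a b σ i]
    have := h.nextU
    tauto

lemma sElem_satSet (hσ : σ ∈ M.Pi) (i : ℕ) : SElem φ (satSet φ M σ i) :=
  ⟨maxCons_satSet i, standCons_of_sSat (varsSF φ) (standsSF φ) hσ
    fun _ hψ => ⟨hψ.1.varsSF_subset, hψ.1.standsSF_subset, hψ.2⟩⟩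

lemma acceptingRun_satSet (hσ : σ ∈ M.Pi) (hφ : SSat M φ σ 0) :
    AcceptingRun φ (satSet φ M σ)
      (fun i => {p | SForm.var p ∈ satSet φ M σ i ∧ p ∈ varsSF φ}) := by
  refine ⟨⟨.base (mem_subfs_self φ), hφ⟩, sElem_satSet hσ, fun _ => rfl, ?_, ?_⟩
  · intro i ψ h
    have hψ : Cl φ ψ := h.of_mem_subfs (by simp [subfs, mem_subfs_self])
    simp only [satSet, Set.mem_ofPred_eq, SSat]
    tauto
  · intro a b h i
    by_cases hU : SSat M (.until_ a b) σ i
    · obtain ⟨j, hij, hb, -⟩ := hU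
      have hb' : Cl φ b := h.of_mem_subfs (by simp [subfs, mem_subfs_self])
      exact ⟨j, hij, Or.inr ⟨hb', hb⟩⟩
    · exact ⟨i, le_rfl, Or.inl fun hU' => hU hU'.2⟩

end SatSet

theorem langNonempty_of_sltlSatisfiable {φ : SForm} (h : SLTLSatisfiable φ) :
    LangNonempty φ :=
  let ⟨_, _, hσ, hφ⟩ := h
  ⟨_, _, acceptingRun_satSet hσ hφ⟩

theorem stmt4_general (φ : SForm) (pv : ℕ × ℕ → ℕ) (P N : Finset (ℕ × ℕ)) :
    SLTLSatisfiable (phiD φ P N pv) → LangNonempty (phiD φ P N pv) :=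
  langNonempty_of_sltlSatisfiable

/-- If `φ_D` is SLTL-satisfiable, then the language of the
generalised nondeterministic Büchi automaton `A_{φ_D}` is non-empty. -/
theorem stmt4 (φ : SForm) (pv : ℕ × ℕ → ℕ) (P N : Finset (ℕ × ℕ))
    (hφ : isLTLPSL φ) (hinj : Function.Injective pv)
    (hfresh : ∀ pr, pv pr ∉ varsSF φ)
    (hpart : P ∪ N = leSubs φ) (hdisj : Disjoint P N) :
    SLTLSatisfiable (phiD φ P N pv) → LangNonempty (phiD φ P N pv) :=
  stmt4_general φ pv P N
end

section
/- For every n ≥ 1, the SLTL formula φ_C := G(◇_s(C_n ∧ p ∧ X G ¬p)) is SLTL-satisfiable. -/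
/-! ### The binary-counter formula `C_n` and `φ_C` -/

/-- `¬p₁ ∧ ⋯ ∧ ¬p_n`, where `p_i := pv i`. -/
def allZero (n : ℕ) (pv : ℕ → ℕ) : SForm :=
  bigAnd ((listIcc 1 n).map (fun i => SForm.neg (SForm.var (pv i))))

/-- `p₁ ∧ ⋯ ∧ p_n`. -/
def allOne (n : ℕ) (pv : ℕ → ℕ) : SForm :=
  bigAnd ((listIcc 1 n).map (fun i => SForm.var (pv i)))

/-- The binary-counter formula `C_n` over variables `p_i := pv i`, `1 ≤ i ≤ n`,
with `p₁` the most significant bit. -/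
def Cn (n : ℕ) (pv : ℕ → ℕ) : SForm :=
  SForm.conj (allZero n pv)
    (SForm.conj (SForm.G (SForm.impl (allOne n pv) (SForm.next (allZero n pv))))
      (bigAnd ((listIcc 1 n).map (fun i =>
        SForm.G (SForm.impl
          (SForm.conj (SForm.neg (SForm.var (pv i)))
            (bigAnd ((listIcc (i + 1) n).map (fun i' => SForm.var (pv i')))))
          (SForm.conj
            (bigAnd ((listIcc (i + 1) n).map (fun i' => SForm.next (SForm.neg (SForm.var (pv i'))))))
            (SForm.conj (SForm.next (SForm.var (pv i)))
              (bigAnd ((listIcc 1 (i - 1)).map (fun i' =>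
                SForm.iffc (SForm.var (pv i')) (SForm.next (SForm.var (pv i')))))))))))))

/-- `φ_C := G(◇_s(C_n ∧ p ∧ X G ¬p))`, where `p := p0`. -/
def phiC (n : ℕ) (pv : ℕ → ℕ) (p0 s : ℕ) : SForm :=
  SForm.G (SForm.dia s (SForm.conj (Cn n pv)
    (SForm.conj (SForm.var p0) (SForm.next (SForm.G (SForm.neg (SForm.var p0)))))))

open Classical in
/-- The value of the counter at position `i` of trace `σ`: the number whose
`n`-bit binary representation `b₁…b_n` (with `b₁` most significant) is given
by `b_j = 1` iff `pv j ∈ σ i`.  `σ, i ⊨ C=m` means `cval n pv σ i = m`. -/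
noncomputable def cval (n : ℕ) (pv : ℕ → ℕ) (σ : Trace) (i : ℕ) : ℕ :=
  ∑ j ∈ Finset.Icc 1 n, if pv j ∈ σ i then 2 ^ (n - j) else 0

/-! ### Auxiliary machinery for the proof of `stmt6` -/

private lemma testBit_div_two_pow' (x i j : ℕ) : (x / 2^i).testBit j = x.testBit (i + j) := by
  rw [← Nat.shiftRight_eq_div_pow, Nat.testBit_shiftRight]

/-- Bit behaviour of `v + 1` when the bits of `v` below `m` are all `1` and bit `m` is `0`. -/
private lemma succ_testBit (v m : ℕ)
    (hlow : ∀ k, k < m → Nat.testBit v k = true)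
    (hm : Nat.testBit v m = false) :
    (∀ k, k < m → Nat.testBit (v+1) k = false) ∧
    Nat.testBit (v+1) m = true ∧
    (∀ k, m < k → Nat.testBit (v+1) k = Nat.testBit v k) := by
  have hpow : (1:ℕ) ≤ 2^m := Nat.one_le_two_pow
  have hlt : (2:ℕ)^m < 2^(m+1) := Nat.pow_lt_pow_right (by norm_num) (Nat.lt_succ_self m)
  have hmod : v % 2^(m+1) = 2^m - 1 := by
    apply Nat.eq_of_testBit_eq
    intro k
    rw [Nat.testBit_mod_two_pow, Nat.testBit_two_pow_sub_one]
    rcases lt_trichotomy k m with h | rfl | h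
    · simp [hlow k h, h, Nat.lt_succ_of_lt h]
    · simp [hm]
    · simp [show ¬ k < m+1 by omega, show ¬ k < m by omega]
  have hv : v = v / 2^(m+1) * 2^(m+1) + (2^m - 1) := by
    conv_lhs => rw [← Nat.div_add_mod v (2^(m+1))]
    rw [hmod, Nat.mul_comm]
  have hv1 : v + 1 = v / 2^(m+1) * 2^(m+1) + 2^m := by omega
  have hmod1 : (v+1) % 2^(m+1) = 2^m := by
    rw [hv1, Nat.mul_add_mod', Nat.mod_eq_of_lt hlt]
  have hdiv1 : (v+1) / 2^(m+1) = v / 2^(m+1) := by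
    rw [hv1, Nat.add_comm, Nat.add_mul_div_right _ _ (by positivity : (0:ℕ) < 2^(m+1)),
      Nat.div_eq_of_lt hlt, Nat.zero_add]
  refine ⟨?_, ?_, ?_⟩
  · intro k hk
    have h := Nat.testBit_mod_two_pow (v+1) (m+1) k
    rw [hmod1, Nat.testBit_two_pow] at h
    simpa [show ¬ m = k by omega, show k < m + 1 by omega] using h.symm
  · have h := Nat.testBit_mod_two_pow (v+1) (m+1) m
    rw [hmod1, Nat.testBit_two_pow] at h
    simpa [Nat.lt_succ_self m] using h.symm
  · intro k hk
    have h1 := testBit_div_two_pow' (v+1) (m+1) (k - (m+1))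
    have h2 := testBit_div_two_pow' v (m+1) (k - (m+1))
    rw [hdiv1] at h1
    rw [show m + 1 + (k - (m+1)) = k by omega] at h1 h2
    rw [← h1, ← h2]

private lemma mem_listIcc {a b j : ℕ} : j ∈ listIcc a b ↔ a ≤ j ∧ j ≤ b := by
  simp only [listIcc, List.mem_map, List.mem_range]
  constructor
  · rintro ⟨k, hk, rfl⟩; omega
  · rintro ⟨h1, h2⟩; exact ⟨j - a, by omega, by omega⟩

private lemma sat_bigAnd {M : SLTLModel} {l : List SForm} {σ : Trace} {i : ℕ} :
    SSat M (bigAnd l) σ i ↔ ∀ a ∈ l, SSat M a σ i := by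
  induction l with
  | nil => simp [bigAnd, SSat]
  | cons h t ih =>
    simp only [bigAnd, List.foldr_cons, SSat, List.mem_cons] at *
    constructor
    · rintro ⟨hh, ht⟩ a (rfl | ha)
      · exact hh
      · exact ih.mp ht a ha
    · intro h'
      exact ⟨h' _ (Or.inl rfl), ih.mpr fun a ha => h' a (Or.inr ha)⟩

private lemma sat_G {M : SLTLModel} {a : SForm} {σ : Trace} {i : ℕ} :
    SSat M (SForm.G a) σ i ↔ ∀ t, i ≤ t → SSat M a σ t := by
  simp only [SForm.G, SSat]
  constructor
  · intro h t ht
    by_contra hc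
    exact h ⟨t, ht, hc, fun _ _ _ => trivial⟩
  · rintro h ⟨t, ht, hc, -⟩
    exact hc (h t ht)

private lemma sat_impl {M : SLTLModel} {a b : SForm} {σ : Trace} {i : ℕ} :
    SSat M (a.impl b) σ i ↔ (SSat M a σ i → SSat M b σ i) := by
  simp only [SForm.impl, SSat]; tauto

private lemma sat_iffc {M : SLTLModel} {a b : SForm} {σ : Trace} {i : ℕ} :
    SSat M (a.iffc b) σ i ↔ (SSat M a σ i ↔ SSat M b σ i) := by
  simp only [SForm.iffc, SForm.impl, SSat]; tauto

/-- The counter value at time `t` for a counter started at `0` at time `i`. -/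
def Vc (n i t : ℕ) : ℕ := (t - i) % 2^n

lemma Vc_lt (n i t : ℕ) : Vc n i t < 2^n := Nat.mod_lt _ (by positivity)

lemma Vc_self (n i : ℕ) : Vc n i i = 0 := by simp [Vc]

lemma Vc_succ (n i t : ℕ) (ht : i ≤ t) : Vc n i (t+1) = (Vc n i t + 1) % 2^n := by
  unfold Vc
  rw [show t + 1 - i = (t - i) + 1 by omega]
  exact (Nat.mod_add_mod _ _ _).symm

/-- The trace in which an `n`-bit binary counter starts at `0` at time `i`
and increments (mod `2^n`), and `p0` holds exactly at time `i`. -/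
def trC (n : ℕ) (pv : ℕ → ℕ) (p0 : ℕ) (i : ℕ) : Trace := fun t =>
  {q | (q = p0 ∧ t = i) ∨
    ∃ j, 1 ≤ j ∧ j ≤ n ∧ q = pv j ∧ i ≤ t ∧ Nat.testBit (Vc n i t) (n - j) = true}

/-- The model whose traces are all the `trC n pv p0 i`, with every standpoint
interpreted as the full set of traces. -/
def MC (n : ℕ) (pv : ℕ → ℕ) (p0 : ℕ) : SLTLModel where
  Pi := Set.range (trC n pv p0)
  lam := fun _ => Set.range (trC n pv p0)
  pi_nonempty := ⟨trC n pv p0 0, 0, rfl⟩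
  lam_sub := fun _ => subset_rfl
  lam_nonempty := fun _ => ⟨trC n pv p0 0, 0, rfl⟩
  lam_star := rfl

section main

variable {n : ℕ} {pv : ℕ → ℕ} {p0 : ℕ}
  (hinj : ∀ i ∈ Finset.Icc 1 n, ∀ j ∈ Finset.Icc 1 n, pv i = pv j → i = j)
  (hp0 : ∀ i ∈ Finset.Icc 1 n, pv i ≠ p0)

include hinj hp0 in
private lemma mem_pv_trC {j : ℕ} (h1 : 1 ≤ j) (h2 : j ≤ n) (i t : ℕ) :
    pv j ∈ trC n pv p0 i t ↔ (i ≤ t ∧ Nat.testBit (Vc n i t) (n - j) = true) := by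
  simp only [trC, Set.mem_setOf_eq]
  constructor
  · rintro (⟨h, _⟩ | ⟨j', hj1, hj2, heq, hit, hb⟩)
    · exact absurd h (hp0 j (Finset.mem_Icc.mpr ⟨h1, h2⟩))
    · have hjj : j = j' :=
        hinj j (Finset.mem_Icc.mpr ⟨h1, h2⟩) j' (Finset.mem_Icc.mpr ⟨hj1, hj2⟩) heq
      subst hjj; exact ⟨hit, hb⟩
  · rintro ⟨hit, hb⟩; exact Or.inr ⟨j, h1, h2, rfl, hit, hb⟩

include hp0 in
private lemma mem_p0_trC (i t : ℕ) : p0 ∈ trC n pv p0 i t ↔ t = i := by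
  simp only [trC, Set.mem_setOf_eq]
  constructor
  · rintro (⟨_, h⟩ | ⟨j, hj1, hj2, heq, _, _⟩)
    · exact h
    · exact absurd heq.symm (hp0 j (Finset.mem_Icc.mpr ⟨hj1, hj2⟩))
  · intro h; exact Or.inl ⟨trivial, h⟩

include hinj hp0 in
private lemma body_sat (hn : 1 ≤ n) (i : ℕ) :
    SSat (MC n pv p0) (SForm.conj (Cn n pv)
      (SForm.conj (SForm.var p0) (SForm.next (SForm.G (SForm.neg (SForm.var p0))))))
      (trC n pv p0 i) i := by
  have hmem : ∀ {j}, 1 ≤ j → j ≤ n → ∀ t,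
      (pv j ∈ trC n pv p0 i t ↔ (i ≤ t ∧ Nat.testBit (Vc n i t) (n - j) = true)) :=
    fun h1 h2 t => mem_pv_trC hinj hp0 h1 h2 i t
  refine ⟨?_, ?_, ?_⟩
  · -- Cn
    rw [Cn]
    refine ⟨?_, ?_, ?_⟩
    · -- allZero at i
      rw [allZero, sat_bigAnd]
      intro a ha
      simp only [List.mem_map] at ha
      obtain ⟨j, hj, rfl⟩ := ha
      rw [mem_listIcc] at hj
      show ¬ pv j ∈ trC n pv p0 i i
      rw [hmem hj.1 hj.2 i, Vc_self]
      simp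
    · -- G (allOne → X allZero)
      rw [sat_G]
      intro t ht
      rw [sat_impl]
      intro hall
      rw [allOne, sat_bigAnd] at hall
      have hbits : ∀ k, k < n → Nat.testBit (Vc n i t) k = true := by
        intro k hk
        have hj := hall (SForm.var (pv (n - k))) (by
          simp only [List.mem_map]
          exact ⟨n - k, mem_listIcc.mpr ⟨by omega, by omega⟩, rfl⟩)
        have h := ((hmem (by omega) (by omega) t).mp hj).2
        rwa [show n - (n - k) = k by omega] at h
      have hVeq : Vc n i t = 2^n - 1 := by
        apply Nat.eq_of_testBit_eq
        intro k
        rw [Nat.testBit_two_pow_sub_one]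
        by_cases hk : k < n
        · simp [hbits k hk, hk]
        · have hlt : Vc n i t < 2^k :=
            lt_of_lt_of_le (Vc_lt n i t) (Nat.pow_le_pow_right (by norm_num) (by omega))
          simp [Nat.testBit_lt_two_pow hlt, hk]
      have hV1 : Vc n i (t+1) = 0 := by
        rw [Vc_succ n i t ht, hVeq,
          show 2^n - 1 + 1 = 2^n from by have : (1:ℕ) ≤ 2^n := Nat.one_le_two_pow; omega,
          Nat.mod_self]
      show SSat _ (allZero n pv) (trC n pv p0 i) (t+1)
      rw [allZero, sat_bigAnd]
      intro a ha
      simp only [List.mem_map] at ha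
      obtain ⟨j, hj, rfl⟩ := ha
      rw [mem_listIcc] at hj
      show ¬ pv j ∈ trC n pv p0 i (t+1)
      rw [hmem hj.1 hj.2 (t+1), hV1]
      simp
    · -- the increment clauses
      rw [sat_bigAnd]
      intro a ha
      simp only [List.mem_map] at ha
      obtain ⟨j, hjmem, rfl⟩ := ha
      rw [mem_listIcc] at hjmem
      obtain ⟨hj1, hj2⟩ := hjmem
      rw [sat_G]
      intro t ht
      rw [sat_impl]
      intro H
      have Hj : ¬ (pv j ∈ trC n pv p0 i t) := H.1
      have Hhigh := H.2
      rw [hmem hj1 hj2 t] at Hj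
      simp only [ht, true_and, Bool.not_eq_true] at Hj
      have Hhigh' : ∀ k, k < n - j → Nat.testBit (Vc n i t) k = true := by
        intro k hk
        have hmm := sat_bigAnd.mp Hhigh (SForm.var (pv (n - k))) (by
          simp only [List.mem_map]
          exact ⟨n - k, mem_listIcc.mpr ⟨by omega, by omega⟩, rfl⟩)
        have h := ((hmem (by omega) (by omega) t).mp hmm).2
        rwa [show n - (n - k) = k by omega] at h
      obtain ⟨B1, B2, B3⟩ := succ_testBit (Vc n i t) (n - j) Hhigh' Hj
      have hne : Vc n i t ≠ 2^n - 1 := by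
        intro h
        rw [h, Nat.testBit_two_pow_sub_one] at Hj
        simp [show n - j < n by omega] at Hj
      have hV1 : Vc n i (t+1) = Vc n i t + 1 := by
        rw [Vc_succ n i t ht, Nat.mod_eq_of_lt]
        have := Vc_lt n i t
        omega
      refine ⟨?_, ?_, ?_⟩
      · rw [sat_bigAnd]
        intro a ha
        simp only [List.mem_map] at ha
        obtain ⟨j', hj', rfl⟩ := ha
        rw [mem_listIcc] at hj'
        show ¬ pv j' ∈ trC n pv p0 i (t+1)
        rw [hmem (by omega) hj'.2 (t+1), hV1]
        simp [B1 (n - j') (by omega)]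
      · show pv j ∈ trC n pv p0 i (t+1)
        rw [hmem hj1 hj2 (t+1), hV1]
        exact ⟨by omega, B2⟩
      · rw [sat_bigAnd]
        intro a ha
        simp only [List.mem_map] at ha
        obtain ⟨j', hj', rfl⟩ := ha
        rw [mem_listIcc] at hj'
        rw [sat_iffc]
        show (pv j' ∈ trC n pv p0 i t) ↔ (pv j' ∈ trC n pv p0 i (t+1))
        have hj'n : j' ≤ n := by omega
        rw [hmem hj'.1 hj'n t, hmem hj'.1 hj'n (t+1), hV1, B3 (n - j') (by omega)]
        constructor <;> rintro ⟨_, hb⟩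
        · exact ⟨by omega, hb⟩
        · exact ⟨ht, hb⟩
  · -- p at i
    show p0 ∈ trC n pv p0 i i
    exact (mem_p0_trC hp0 i i).mpr rfl
  · -- X G ¬p
    show SSat _ (SForm.G (SForm.neg (SForm.var p0))) (trC n pv p0 i) (i+1)
    rw [sat_G]
    intro t ht
    show ¬ p0 ∈ trC n pv p0 i t
    rw [mem_p0_trC hp0 i t]
    omega

end main

/-- For every `n ≥ 1`, the formula
`φ_C := G(◇_s(C_n ∧ p ∧ X G ¬p))` is SLTL-satisfiable. -/
theorem stmt6 (n : ℕ) (hn : 1 ≤ n) (pv : ℕ → ℕ)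
    (hinj : ∀ i ∈ Finset.Icc 1 n, ∀ j ∈ Finset.Icc 1 n, pv i = pv j → i = j)
    (p0 : ℕ) (hp0 : ∀ i ∈ Finset.Icc 1 n, pv i ≠ p0) (s : ℕ) :
    SLTLSatisfiable (phiC n pv p0 s) := by
  refine ⟨MC n pv p0, trC n pv p0 0, ⟨0, rfl⟩, ?_⟩
  rw [phiC, sat_G]
  intro t ht
  exact ⟨trC n pv p0 t, ⟨t, rfl⟩, body_sat hinj hp0 hn t⟩
end

section
/- Let n ≥ 1 and φ_C := G(◇_s(C_n ∧ p ∧ X G ¬p)). For every SLTL model M = (Π, λ) and every σ ∈ Π such that M, σ, 0 ⊨ φ_C, the set λ(s) is infinite. -/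
/-- For every SLTL model `M = (Π, λ)` and `σ ∈ Π` with
`M, σ, 0 ⊨ φ_C`, the set `λ(s)` is infinite. -/
theorem stmt7 (n : ℕ) (hn : 1 ≤ n) (pv : ℕ → ℕ)
    (hinj : ∀ i ∈ Finset.Icc 1 n, ∀ j ∈ Finset.Icc 1 n, pv i = pv j → i = j)
    (p0 : ℕ) (hp0 : ∀ i ∈ Finset.Icc 1 n, pv i ≠ p0) (s : ℕ)
    (M : SLTLModel) (σ : Trace) (hσ : σ ∈ M.Pi)
    (h : SSat M (phiC n pv p0 s) σ 0) :
    (M.lam s).Infinite := by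

  -- For each i, extract a witness trace in λ(s) with p0 true at i and false after i.
  have key : ∀ i : ℕ, ∃ σ', σ' ∈ M.lam s ∧ p0 ∈ σ' i ∧ ∀ j, i + 1 ≤ j → p0 ∉ σ' j := by
    intro i
    have hdia : SSat M (SForm.dia s (SForm.conj (Cn n pv)
        (SForm.conj (SForm.var p0) (SForm.next (SForm.G (SForm.neg (SForm.var p0))))))) σ i := by
      by_contra hc
      exact h ⟨i, Nat.zero_le i, hc, fun _ _ _ => trivial⟩
    obtain ⟨σ', hmem, hsat⟩ := hdia
    obtain ⟨_, hp, hG⟩ := hsat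
    refine ⟨σ', hmem, hp, ?_⟩
    intro j hj hpj
    exact hG ⟨j, hj, not_not_intro hpj, fun _ _ _ => trivial⟩
  choose f hmem hp hnp using key
  have hfinj : Function.Injective f := by
    intro i j hij
    by_contra hne
    rcases Nat.lt_or_ge i j with hlt | hge
    · exact hnp i j hlt (hij ▸ hp j)
    · have hlt : j < i := lt_of_le_of_ne hge (Ne.symm hne)
      exact hnp j i hlt (hij ▸ hp i)
  exact Set.infinite_of_injective_forall_mem hfinj hmem
end

section
/- There exists a polynomial q such that every SLTL-satisfiable LTL∨PSL formula φ is satisfied in an SLTL model M = (Π, λ) whose set Π of traces has cardinality at most q(|φ|), where |φ| denotes the size of φ. -/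
/-!
Take a model `M` and a trace `σ` satisfying `φ`. Keep `σ` and, besides it, finitely many
"diagonal" traces: the trace attached to a modal subformula `◇ₛ ψ` or `□ₛ ψ` reads, at each
instant `i`, the valuation at `i` of a trace of `λ(s)` on which `ψ` holds (fails) at `i`, if
there is one. As `ψ` is temporal-free, its truth at `i` only depends on valuations at `i`, so
this pointwise gluing preserves it. Pairs of standpoints of `φ` get a trace of `λ(s) \ λ(s')`
in the same way, which preserves the atoms `s ≼ s'`. A fresh variable per trace keeps the
glued traces apart. This leaves `O(|φ|²)` traces.
-/

deriving instance DecidableEq for SForm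

def modalScopes : SForm → Finset (ℕ × SForm)
  | .var _ => ∅
  | .le _ _ => ∅
  | .tru => ∅
  | .fls => ∅
  | .neg a => modalScopes a
  | .conj a b => modalScopes a ∪ modalScopes b
  | .dia s a => insert (s, a) (modalScopes a)
  | .box s a => insert (s, a) (modalScopes a)
  | .next a => modalScopes a
  | .until_ a b => modalScopes a ∪ modalScopes b

theorem card_modalScopes_le (a : SForm) : (modalScopes a).card ≤ sizeSF a := by
  induction a with
  | neg a ih | next a ih => simpa [modalScopes, sizeSF] using ih.trans (Nat.le_succ _)
  | dia s a ih | box s a ih =>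
    grw [modalScopes, Finset.card_insert_le, ih, sizeSF]
  | conj a b iha ihb | until_ a b iha ihb =>
    grw [modalScopes, Finset.card_union_le, iha, ihb, sizeSF]; omega
  | _ => simp [modalScopes]

theorem card_standsSF_le (a : SForm) : (standsSF a).card ≤ 2 * sizeSF a := by
  induction a with
  | le s s' => grw [standsSF, Finset.card_insert_le, Finset.card_singleton, sizeSF]
  | neg a ih | next a ih => simp only [standsSF, sizeSF]; omega
  | dia s a ih | box s a ih => grw [standsSF, Finset.card_insert_le, ih, sizeSF]; omega
  | conj a b iha ihb | until_ a b iha ihb =>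
    grw [standsSF, Finset.card_union_le, iha, ihb, sizeSF]; omega
  | _ => simp [standsSF]

theorem exists_injOn_nat_notMem {α : Type*} {F : Set α} (hF : F.Finite) (V : Finset ℕ) :
    ∃ tag : α → ℕ, F.InjOn tag ∧ ∀ x, tag x ∉ V := by
  obtain ⟨g, hg⟩ := Set.countable_iff_exists_injOn.mp hF.countable
  refine ⟨fun x => V.sup id + 1 + g x, fun x hx y hy h => hg hx hy (Nat.add_left_cancel h),
    fun x hx => ?_⟩
  have := Finset.le_sup (f := id) hx
  simp only [id] at this
  omega

namespace SLTLModel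

variable (M : SLTLModel)

def HasWitness (F : Set (ℕ → Trace)) (s : ℕ) (P : Trace → ℕ → Prop) : Prop :=
  ∃ f ∈ F, ∀ i, f i ∈ M.lam s ∧ ((∃ w ∈ M.lam s, P w i) → P (f i) i)

noncomputable def witnessSource (s : ℕ) (P : Trace → ℕ → Prop) : ℕ → Trace := fun i =>
  Classical.epsilon fun w => w ∈ M.lam s ∧ ((∃ w ∈ M.lam s, P w i) → P w i)

theorem hasWitness_of_witnessSource_mem {F : Set (ℕ → Trace)} {s : ℕ}
    {P : Trace → ℕ → Prop} (h : M.witnessSource s P ∈ F) : M.HasWitness F s P := by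
  refine ⟨_, h, fun i => ?_⟩
  have hex : ∃ w, w ∈ M.lam s ∧ ((∃ w ∈ M.lam s, P w i) → P w i) := by
    by_cases hP : ∃ w ∈ M.lam s, P w i
    · obtain ⟨w, hw, hPw⟩ := hP
      exact ⟨w, hw, fun _ => hPw⟩
    · obtain ⟨w, hw⟩ := M.lam_nonempty s
      exact ⟨w, hw, fun h => (hP h).elim⟩
  exact Classical.epsilon_spec hex

theorem witnessSource_mem_Pi (s : ℕ) (P : Trace → ℕ → Prop) (i : ℕ) :
    M.witnessSource s P i ∈ M.Pi := by
  obtain ⟨f, rfl, hf⟩ := M.hasWitness_of_witnessSource_mem (Set.mem_singleton _)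
  exact M.lam_sub s (hf i).1

/-- The data of a small model of `M` around the trace `base`. Each *source* `f` becomes the
trace `i ↦ f i i`, cut down to `vars` and marked by the fresh variable `tag f`. -/
structure Skeleton where
  base : Trace
  vars : Set ℕ
  stands : Set ℕ
  sources : Set (ℕ → Trace)
  tag : (ℕ → Trace) → ℕ
  base_mem : (fun _ => base) ∈ sources
  sources_mem : ∀ f ∈ sources, ∀ i, f i ∈ M.Pi
  tag_injOn : sources.InjOn tag
  tag_notMem : ∀ f, tag f ∉ vars
  separates : ∀ s ∈ stands, ∀ s' ∈ stands, M.HasWitness sources s fun w _ => w ∉ M.lam s'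

namespace Skeleton

variable {M} (K : M.Skeleton)

def trace (f : ℕ → Trace) : Trace := fun i => insert (K.tag f) (f i i ∩ K.vars)

def model : SLTLModel where
  Pi := K.trace '' K.sources
  lam s := K.trace '' {f ∈ K.sources | s ∈ K.stands → ∀ i, f i ∈ M.lam s}
  pi_nonempty := ⟨_, Set.mem_image_of_mem _ K.base_mem⟩
  lam_sub _ := Set.image_mono (Set.sep_subset _ _)
  lam_nonempty s := by
    by_cases hs : s ∈ K.stands
    · obtain ⟨f, hf, hw⟩ := K.separates s hs s hs
      exact ⟨_, f, ⟨hf, fun _ i => (hw i).1⟩, rfl⟩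
    · exact ⟨_, _, ⟨K.base_mem, fun h => (hs h).elim⟩, rfl⟩
  lam_star := by
    refine congrArg _ (Set.sep_eq_self_iff_mem_true.mpr fun f hf _ i => ?_)
    rw [M.lam_star]
    exact K.sources_mem f hf i

def Adequate (a : SForm) : Prop :=
  ↑(varsSF a) ⊆ K.vars ∧ ↑(standsSF a) ⊆ K.stands ∧
    ∀ p ∈ modalScopes a, M.HasWitness K.sources p.1 (SSat M p.2) ∧
      M.HasWitness K.sources p.1 fun w i => ¬ SSat M p.2 w i

variable {K}

theorem Adequate.mono {a b : SForm} (h : K.Adequate a) (hv : varsSF b ⊆ varsSF a)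
    (hs : standsSF b ⊆ standsSF a) (hm : modalScopes b ⊆ modalScopes a) : K.Adequate b :=
  ⟨(Finset.coe_subset.mpr hv).trans h.1, (Finset.coe_subset.mpr hs).trans h.2.1,
    fun p hp => h.2.2 p (hm hp)⟩

variable (K)

theorem trace_injOn : K.sources.InjOn K.trace := by
  intro f hf g hg h
  have hmem : K.tag f ∈ K.trace g 0 := h ▸ Set.mem_insert _ _
  rcases hmem with htag | ⟨-, hvar⟩
  · exact K.tag_injOn hf hg htag
  · exact (K.tag_notMem f hvar).elim

theorem trace_mem_lam_iff {f : ℕ → Trace} (hf : f ∈ K.sources) {s : ℕ} (hs : s ∈ K.stands) :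
    K.trace f ∈ K.model.lam s ↔ ∀ i, f i ∈ M.lam s := by
  constructor
  · rintro ⟨g, ⟨hg, hgs⟩, hgf⟩
    exact K.trace_injOn hg hf hgf ▸ hgs hs
  · exact fun h => ⟨f, ⟨hf, fun _ => h⟩, rfl⟩

theorem model_lam_subset_iff {s s' : ℕ} (hs : s ∈ K.stands) (hs' : s' ∈ K.stands) :
    K.model.lam s ⊆ K.model.lam s' ↔ M.lam s ⊆ M.lam s' := by
  constructor
  · intro h
    by_contra hsub
    obtain ⟨f, hf, hw⟩ := K.separates s hs s' hs'
    have hfs : K.trace f ∈ K.model.lam s := (K.trace_mem_lam_iff hf hs).2 fun i => (hw i).1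
    have hfs' := (K.trace_mem_lam_iff hf hs').1 (h hfs) 0
    exact (hw 0).2 (Set.not_subset.mp hsub) hfs'
  · rintro h _ ⟨f, ⟨hf, hfs⟩, rfl⟩
    exact ⟨f, ⟨hf, fun _ i => h (hfs hs i)⟩, rfl⟩

theorem exists_mem_model_lam_iff {s : ℕ} (hs : s ∈ K.stands) {P : Trace → Prop}
    {Q : Trace → ℕ → Prop} {i : ℕ} (hw : M.HasWitness K.sources s Q)
    (hPQ : ∀ f ∈ K.sources, P (K.trace f) ↔ Q (f i) i) :
    (∃ t ∈ K.model.lam s, P t) ↔ ∃ w ∈ M.lam s, Q w i := by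
  constructor
  · rintro ⟨_, ⟨f, ⟨hf, hfs⟩, rfl⟩, hP⟩
    exact ⟨f i, hfs hs i, (hPQ f hf).1 hP⟩
  · intro hQ
    obtain ⟨f, hf, hfw⟩ := hw
    exact ⟨K.trace f, (K.trace_mem_lam_iff hf hs).2 fun j => (hfw j).1,
      (hPQ f hf).2 ((hfw i).2 hQ)⟩

theorem sSat_trace_iff {a : SForm} (hK : K.Adequate a) (ha : noTemp a) {f : ℕ → Trace}
    (hf : f ∈ K.sources) (i : ℕ) : SSat K.model a (K.trace f) i ↔ SSat M a (f i) i := by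
  induction a generalizing f i with
  | var p =>
    have hp : p ∈ K.vars := hK.1 (Finset.mem_singleton_self p)
    have htag : p ≠ K.tag f := fun h => K.tag_notMem f (h ▸ hp)
    simp [SSat, trace, htag, hp]
  | le s s' =>
    exact K.model_lam_subset_iff (hK.2.1 (by simp [standsSF])) (hK.2.1 (by simp [standsSF]))
  | tru | fls => exact Iff.rfl
  | neg a ih => exact not_congr (ih hK ha hf i)
  | conj a b iha ihb =>
    exact and_congr
      (iha (hK.mono Finset.subset_union_left Finset.subset_union_left
        Finset.subset_union_left) ha.1 hf i)
      (ihb (hK.mono Finset.subset_union_right Finset.subset_union_right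
        Finset.subset_union_right) ha.2 hf i)
  | dia s a ih =>
    have hKa : K.Adequate a :=
      hK.mono subset_rfl (Finset.subset_insert _ _) (Finset.subset_insert _ _)
    exact K.exists_mem_model_lam_iff (hK.2.1 (Finset.mem_insert_self _ _))
      (hK.2.2 _ (Finset.mem_insert_self _ _)).1 fun g hg => ih hKa ha hg i
  | box s a ih =>
    have hKa : K.Adequate a :=
      hK.mono subset_rfl (Finset.subset_insert _ _) (Finset.subset_insert _ _)
    have h := K.exists_mem_model_lam_iff (hK.2.1 (Finset.mem_insert_self _ _))
      (P := fun t => ¬ SSat K.model a t i) (hK.2.2 _ (Finset.mem_insert_self _ _)).2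
      fun g hg => not_congr (ih hKa ha hg i)
    simpa only [SSat, not_exists, not_and, not_not] using not_congr h
  | next | until_ => exact ha.elim

theorem sSat_trace_base_iff {a : SForm} (ha : isLTLPSL a) (hK : K.Adequate a) (i : ℕ) :
    SSat K.model a (K.trace fun _ => K.base) i ↔ SSat M a K.base i := by
  induction a generalizing i with
  | var | le | dia | box => exact K.sSat_trace_iff hK ha K.base_mem i
  | tru | fls => exact Iff.rfl
  | neg a ih => exact not_congr (ih ha hK i)
  | next a ih => exact ih ha hK (i + 1)
  | conj a b iha ihb | until_ a b iha ihb =>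
    have hA := iha ha.1 (hK.mono Finset.subset_union_left Finset.subset_union_left
      Finset.subset_union_left)
    have hB := ihb ha.2 (hK.mono Finset.subset_union_right Finset.subset_union_right
      Finset.subset_union_right)
    simp only [SSat, hA, hB]

end Skeleton

open Classical in
noncomputable def witnessSources (σ : Trace) (φ : SForm) : Finset (ℕ → Trace) :=
  insert (fun _ => σ)
    (((standsSF φ ×ˢ standsSF φ).image fun p => M.witnessSource p.1 fun w _ => w ∉ M.lam p.2) ∪
      (modalScopes φ).image (fun p => M.witnessSource p.1 (SSat M p.2)) ∪
      (modalScopes φ).image fun p => M.witnessSource p.1 fun w i => ¬ SSat M p.2 w i)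

theorem card_witnessSources_le (σ : Trace) (φ : SForm) :
    (M.witnessSources σ φ).card ≤ 4 * sizeSF φ ^ 2 + 2 * sizeSF φ + 1 := by
  classical
  grw [witnessSources, Finset.card_insert_le, Finset.card_union_le, Finset.card_union_le,
    Finset.card_image_le, Finset.card_image_le, Finset.card_image_le, Finset.card_product,
    card_standsSF_le, card_modalScopes_le]
  ring_nf
  omega

theorem exists_skeleton {σ : Trace} (hσ : σ ∈ M.Pi) (φ : SForm) :
    ∃ K : M.Skeleton, K.base = σ ∧ K.Adequate φ ∧ K.sources.Finite ∧
      K.sources.ncard ≤ 4 * sizeSF φ ^ 2 + 2 * sizeSF φ + 1 := by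
  classical
  obtain ⟨tag, htag, htagV⟩ :=
    exists_injOn_nat_notMem (M.witnessSources σ φ).finite_toSet (varsSF φ)
  refine ⟨⟨σ, varsSF φ, standsSF φ, M.witnessSources σ φ, tag, ?_, ?_, htag, htagV, ?_⟩, rfl,
    ⟨subset_rfl, subset_rfl, ?_⟩, Finset.finite_toSet _, ?_⟩
  · simp [witnessSources]
  · intro f hf i
    simp only [witnessSources, Finset.coe_insert, Finset.coe_union, Finset.coe_image,
      Set.mem_insert_iff, Set.mem_union, Set.mem_image] at hf
    rcases hf with rfl | ((⟨p, -, rfl⟩ | ⟨p, -, rfl⟩) | ⟨p, -, rfl⟩)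
    · exact hσ
    all_goals exact M.witnessSource_mem_Pi _ _ i
  · intro s hs s' hs'
    refine M.hasWitness_of_witnessSource_mem (Finset.mem_insert_of_mem ?_)
    exact Finset.mem_union_left _ (Finset.mem_union_left _
      (Finset.mem_image.2 ⟨(s, s'), Finset.mem_product.2 ⟨hs, hs'⟩, rfl⟩))
  · intro p hp
    refine ⟨M.hasWitness_of_witnessSource_mem (Finset.mem_insert_of_mem ?_),
      M.hasWitness_of_witnessSource_mem (Finset.mem_insert_of_mem ?_)⟩
    · exact Finset.mem_union_left _ (Finset.mem_union_right _ (Finset.mem_image_of_mem _ hp))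
    · exact Finset.mem_union_right _ (Finset.mem_image_of_mem _ hp)
  · rw [Set.ncard_coe_finset]
    exact M.card_witnessSources_le σ φ

end SLTLModel

theorem exists_small_model {φ : SForm} (hφ : isLTLPSL φ) (hsat : SLTLSatisfiable φ) :
    ∃ M : SLTLModel, (∃ σ ∈ M.Pi, SSat M φ σ 0) ∧ M.Pi.Finite ∧
      M.Pi.ncard ≤ 4 * sizeSF φ ^ 2 + 2 * sizeSF φ + 1 := by
  obtain ⟨M, σ, hσ, hφσ⟩ := hsat
  obtain ⟨K, rfl, hK, hfin, hcard⟩ := M.exists_skeleton hσ φ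
  exact ⟨K.model, ⟨_, Set.mem_image_of_mem _ K.base_mem, (K.sSat_trace_base_iff hφ hK 0).2 hφσ⟩,
    hfin.image _, (Set.ncard_image_le hfin).trans hcard⟩

/-- There is a polynomial `q` such that every SLTL-satisfiable
LTL∨PSL formula `φ` is satisfied in an SLTL model whose set of traces has
cardinality at most `q(|φ|)`. -/
theorem stmt10 :
    ∃ q : Polynomial ℕ, ∀ φ : SForm, isLTLPSL φ → SLTLSatisfiable φ →
      ∃ M : SLTLModel, (∃ σ ∈ M.Pi, SSat M φ σ 0) ∧
        M.Pi.Finite ∧ M.Pi.ncard ≤ q.eval (sizeSF φ) := by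
  refine ⟨Polynomial.C 4 * Polynomial.X ^ 2 + Polynomial.C 2 * Polynomial.X + 1,
    fun φ hφ hsat => ?_⟩
  simpa using exists_small_model hφ hsat
end

section
/- Let M = (ℕ × W, L) be a PTL×S5 model. Define the SLTL model M' = (Π, λ) where Π = {σ_{w'} | w' ∈ W} with σ_{w'}(n) := L(n, w') for all n ∈ ℕ, and λ(s) := Π for every standpoint symbol s. Then for every PTL×S5 formula ψ and every (n, w') ∈ ℕ × W: M, (n, w') ⊨ ψ if and only if M', σ_{w'}, n ⊨ τ₁(ψ), where τ₁ replaces every occurrence of ◇ by ◇_* and every occurrence of □ by □_* and is otherwise homomorphic. -/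
/-- Given a PTL×S5 model `M = (ℕ × W, L)`, the SLTL model
`M' = (Π, λ)` with `Π = {σ_{w'} | w' ∈ W}`, `σ_{w'}(n) = L(n, w')`, and
`λ(s) = Π` for every standpoint `s`, satisfies: for every PTL×S5 formula `ψ`
and every `(n, w')`, `M, (n, w') ⊨ ψ` iff `M', σ_{w'}, n ⊨ τ₁(ψ)`. -/
theorem stmt12 (W : Type) [Nonempty W] (L : ℕ → W → Set ℕ) (M' : SLTLModel)
    (hPi : M'.Pi = Set.range (fun w' : W => fun n => L n w'))
    (hlam : ∀ s, M'.lam s = M'.Pi)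
    (ψ : PForm ℕ) (n : ℕ) (w' : W) :
    PSat L ψ n w' ↔ SSat M' (tau1 ψ) (fun k => L k w') n := by
  induction ψ generalizing n w' with
  | var p => simp [PSat, tau1, SSat]
  | tru => simp [PSat, tau1, SSat]
  | fls => simp [PSat, tau1, SSat]
  | neg a ih => simp [PSat, tau1, SSat, ih]
  | conj a b iha ihb => simp [PSat, tau1, SSat, iha, ihb]
  | dia a ih =>
    simp only [PSat, tau1, SSat, hlam, hPi, Set.mem_range]
    constructor
    · rintro ⟨w'', hw⟩
      exact ⟨_, ⟨w'', rfl⟩, (ih n w'').mp hw⟩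
    · rintro ⟨_, ⟨w'', rfl⟩, h⟩
      exact ⟨w'', (ih n w'').mpr h⟩
  | box a ih =>
    simp only [PSat, tau1, SSat, hlam, hPi, Set.mem_range]
    constructor
    · rintro h _ ⟨w'', rfl⟩
      exact (ih n w'').mp (h w'')
    · intro h w''
      exact (ih n w'').mpr (h _ ⟨w'', rfl⟩)
  | next a ih => simp [PSat, tau1, SSat, ih]
  | until_ a b iha ihb => simp [PSat, tau1, SSat, iha, ihb]
end

section
/- Let M = (Π, λ) be an SLTL model. Define the PTL×S5 model M' = (ℕ × W, L) with W := Π and L(n, σ') := σ'(n) for every (n, σ') ∈ ℕ × Π. Then for every PTL×S5 formula ψ, every σ' ∈ Π, and every n ∈ ℕ: M, σ', n ⊨ τ₁(ψ) if and only if M', (n, σ') ⊨ ψ, where τ₁ replaces every occurrence of ◇ by ◇_* and every occurrence of □ by □_* and is otherwise homomorphic. -/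
/-- Given an SLTL model `M = (Π, λ)`, the PTL×S5 model
`M' = (ℕ × W, L)` with `W = Π` and `L(n, σ') = σ'(n)` satisfies: for every
PTL×S5 formula `ψ`, every `σ' ∈ Π`, and every `n`,
`M, σ', n ⊨ τ₁(ψ)` iff `M', (n, σ') ⊨ ψ`. -/
theorem stmt13 (M : SLTLModel) (ψ : PForm ℕ) (σ' : {σ : Trace // σ ∈ M.Pi}) (n : ℕ) :
    SSat M (tau1 ψ) σ'.1 n ↔
      PSat (fun k (τ : {σ : Trace // σ ∈ M.Pi}) => τ.1 k) ψ n σ' := by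
  induction ψ generalizing σ' n with
  | var p => rfl
  | tru => simp [tau1, SSat, PSat]
  | fls => simp [tau1, SSat, PSat]
  | neg a ih => simp [tau1, SSat, PSat, ih]
  | conj a b iha ihb => simp [tau1, SSat, PSat, iha, ihb]
  | dia a ih =>
    simp only [tau1, SSat, PSat, M.lam_star]
    constructor
    · rintro ⟨τ, hτ, h⟩; exact ⟨⟨τ, hτ⟩, (ih ⟨τ, hτ⟩ n).mp h⟩
    · rintro ⟨τ, h⟩; exact ⟨τ.1, τ.2, (ih τ n).mpr h⟩
  | box a ih =>
    simp only [tau1, SSat, PSat, M.lam_star]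
    constructor
    · intro h τ; exact (ih τ n).mp (h τ.1 τ.2)
    · intro h τ hτ; exact (ih ⟨τ, hτ⟩ n).mpr (h ⟨τ, hτ⟩)
  | next a ih => simp [tau1, SSat, PSat, ih]
  | until_ a b iha ihb => simp [tau1, SSat, PSat, iha, ihb]
end

section
/- Let n ≥ 1 and let σ : ℕ → 𝒫(P) be a trace. If σ, i ⊨ C_n, then σ, i ⊨ C=0 and, for every j ≥ i, σ, j ⊨ C=m where m is the unique element of {0,…,2ⁿ−1} with m ≡ j − i (mod 2ⁿ). -/
/-! ### LTL on traces, and the binary-counter formula `C_n` -/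

inductive LForm : Type where
  | var : ℕ → LForm
  | tru : LForm
  | neg : LForm → LForm
  | conj : LForm → LForm → LForm
  | next : LForm → LForm
  | until_ : LForm → LForm → LForm

/-- LTL satisfaction on a trace. -/
def TSat : LForm → Trace → ℕ → Prop
  | .var p, σ, i => p ∈ σ i
  | .tru, _, _ => True
  | .neg a, σ, i => ¬ TSat a σ i
  | .conj a b, σ, i => TSat a σ i ∧ TSat b σ i
  | .next a, σ, i => TSat a σ (i + 1)
  | .until_ a b, σ, i =>
      ∃ i', i ≤ i' ∧ TSat b σ i' ∧ ∀ i'', i ≤ i'' → i'' < i' → TSat a σ i''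

def LForm.impl (a b : LForm) : LForm := .neg (.conj a (.neg b))
def LForm.iffc (a b : LForm) : LForm := .conj (a.impl b) (b.impl a)
/-- `G φ := ¬(⊤ U ¬φ)`. -/
def LForm.G (a : LForm) : LForm := .neg (.until_ .tru (.neg a))
def bigAndL (l : List LForm) : LForm := l.foldr .conj .tru
/-- The list `[a, a+1, …, b]`. -/
def listIccL (a b : ℕ) : List ℕ := (List.range (b + 1 - a)).map (fun k => a + k)

def allZeroL (n : ℕ) (pv : ℕ → ℕ) : LForm :=
  bigAndL ((listIccL 1 n).map (fun i => LForm.neg (LForm.var (pv i))))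

def allOneL (n : ℕ) (pv : ℕ → ℕ) : LForm :=
  bigAndL ((listIccL 1 n).map (fun i => LForm.var (pv i)))

/-- The binary-counter formula `C_n` over the variables `p_i := pv i`,
`1 ≤ i ≤ n`, with `p₁` the most significant bit. -/
def CnL (n : ℕ) (pv : ℕ → ℕ) : LForm :=
  LForm.conj (allZeroL n pv)
    (LForm.conj (LForm.G (LForm.impl (allOneL n pv) (LForm.next (allZeroL n pv))))
      (bigAndL ((listIccL 1 n).map (fun i =>
        LForm.G (LForm.impl
          (LForm.conj (LForm.neg (LForm.var (pv i)))
            (bigAndL ((listIccL (i + 1) n).map (fun i' => LForm.var (pv i')))))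
          (LForm.conj
            (bigAndL ((listIccL (i + 1) n).map (fun i' => LForm.next (LForm.neg (LForm.var (pv i'))))))
            (LForm.conj (LForm.next (LForm.var (pv i)))
              (bigAndL ((listIccL 1 (i - 1)).map (fun i' =>
                LForm.iffc (LForm.var (pv i')) (LForm.next (LForm.var (pv i')))))))))))))

open Classical in
/-- The counter value at position `i` of trace `σ`: the number whose `n`-bit
binary representation `b₁…b_n` (with `b₁` most significant) is given by
`b_j = 1` iff `pv j ∈ σ i`.  `σ, i ⊨ C=m` means `cvalL n pv σ i = m`. -/
noncomputable def cvalL (n : ℕ) (pv : ℕ → ℕ) (σ : Trace) (i : ℕ) : ℕ :=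
  ∑ j ∈ Finset.Icc 1 n, if pv j ∈ σ i then 2 ^ (n - j) else 0

/-!
The first conjunct of `C_n` sets every bit to `0`. At each later step the counter either wraps
from all ones to all zeros, or the least significant `0` bit is set, the `1` bits below it are
cleared and the bits above it are kept. Both amount to adding `1` modulo `2ⁿ`, so induction on
`j` gives the value `(j - i) mod 2ⁿ` at position `j`.
-/

lemma mem_listIccL {a b k : ℕ} : k ∈ listIccL a b ↔ a ≤ k ∧ k ≤ b := by
  simp only [listIccL, List.mem_map, List.mem_range]
  constructor
  · rintro ⟨m, hm, rfl⟩; omega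
  · rintro ⟨h1, h2⟩; exact ⟨k - a, by omega, by omega⟩

section Semantics

variable {σ : Trace} {i : ℕ}

lemma tsat_bigAndL {l : List LForm} : TSat (bigAndL l) σ i ↔ ∀ a ∈ l, TSat a σ i := by
  induction l with
  | nil => simp [bigAndL, TSat]
  | cons a l ih => simp [bigAndL, TSat, ← ih]

lemma tsat_bigAndL_map_listIccL {a b : ℕ} {f : ℕ → LForm} :
    TSat (bigAndL ((listIccL a b).map f)) σ i ↔ ∀ k, a ≤ k → k ≤ b → TSat (f k) σ i := by
  simp only [tsat_bigAndL, List.forall_mem_map, mem_listIccL, and_imp]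

lemma tsat_G {a : LForm} : TSat a.G σ i ↔ ∀ j, i ≤ j → TSat a σ j := by
  simp [LForm.G, TSat]

lemma tsat_impl {a b : LForm} : TSat (a.impl b) σ i ↔ (TSat a σ i → TSat b σ i) := by
  simp [LForm.impl, TSat]

lemma tsat_iffc {a b : LForm} : TSat (a.iffc b) σ i ↔ (TSat a σ i ↔ TSat b σ i) := by
  simp only [LForm.iffc, TSat, tsat_impl]
  tauto

lemma tsat_CnL {n : ℕ} {pv : ℕ → ℕ} :
    TSat (CnL n pv) σ i ↔
      (∀ k, 1 ≤ k → k ≤ n → pv k ∉ σ i) ∧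
      (∀ j, i ≤ j → (∀ k, 1 ≤ k → k ≤ n → pv k ∈ σ j) →
        ∀ k, 1 ≤ k → k ≤ n → pv k ∉ σ (j + 1)) ∧
      ∀ l, 1 ≤ l → l ≤ n → ∀ j, i ≤ j →
        pv l ∉ σ j → (∀ k, l < k → k ≤ n → pv k ∈ σ j) →
          (∀ k, l < k → k ≤ n → pv k ∉ σ (j + 1)) ∧ pv l ∈ σ (j + 1) ∧
            ∀ k, 1 ≤ k → k < l → (pv k ∈ σ j ↔ pv k ∈ σ (j + 1)) := by
  have hlt : ∀ k l, 1 ≤ k → (k ≤ l - 1 ↔ k < l) := by omega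
  simp +contextual only [CnL, allZeroL, allOneL, TSat, tsat_bigAndL_map_listIccL, tsat_G,
    tsat_impl, tsat_iffc, Nat.add_one_le_iff, hlt, and_imp]

end Semantics

section BinaryValue

open Classical

noncomputable def binVal (n : ℕ) (b : ℕ → Prop) : ℕ :=
  ∑ k ∈ Finset.Icc 1 n, if b k then 2 ^ (n - k) else 0

variable {n : ℕ} {b b' : ℕ → Prop}

lemma binVal_succ : binVal (n + 1) b = 2 * binVal n b + if b (n + 1) then 1 else 0 := by
  rw [binVal, Finset.sum_Icc_succ_top (by omega), binVal, Finset.mul_sum, Nat.sub_self, pow_zero]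
  congr 1
  refine Finset.sum_congr rfl fun k hk => ?_
  rw [Finset.mem_Icc] at hk
  split_ifs
  · rw [Nat.sub_add_comm hk.2, pow_succ']
  · rfl

lemma binVal_congr (h : ∀ k, 1 ≤ k → k ≤ n → (b k ↔ b' k)) : binVal n b = binVal n b' := by
  refine Finset.sum_congr rfl fun k hk => ?_
  rw [Finset.mem_Icc] at hk
  simp only [h k hk.1 hk.2]

lemma binVal_eq_zero (h : ∀ k, 1 ≤ k → k ≤ n → ¬ b k) : binVal n b = 0 := by
  refine Finset.sum_eq_zero fun k hk => ?_
  rw [Finset.mem_Icc] at hk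
  simp only [h k hk.1 hk.2, if_false]

lemma binVal_lt_two_pow : binVal n b < 2 ^ n := by
  induction n with
  | zero => simp [binVal]
  | succ n ih => rw [binVal_succ, pow_succ]; split_ifs <;> omega

lemma binVal_eq_two_pow_sub_one (h : ∀ k, 1 ≤ k → k ≤ n → b k) : binVal n b = 2 ^ n - 1 := by
  induction n with
  | zero => simp [binVal]
  | succ n ih =>
    have := Nat.one_le_two_pow (n := n)
    rw [binVal_succ, ih fun k hk hkn => h k hk (by omega), if_pos (h _ (by omega) le_rfl),
      pow_succ]
    omega

-- Binary increment; bit `n` is the least significant one.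
lemma binVal_eq_add_one {l : ℕ} (hl : 1 ≤ l) (hln : l ≤ n) (hb : ¬ b l) (hb' : b' l)
    (hbelow : ∀ k, l < k → k ≤ n → b k ∧ ¬ b' k)
    (habove : ∀ k, 1 ≤ k → k < l → (b k ↔ b' k)) :
    binVal n b' = binVal n b + 1 := by
  induction n with
  | zero => omega
  | succ n ih =>
    rw [binVal_succ, binVal_succ]
    rcases Nat.lt_or_eq_of_le hln with hlt | rfl
    · obtain ⟨hbn, hbn'⟩ := hbelow (n + 1) hlt le_rfl
      rw [ih (by omega) fun k hk hkn => hbelow k hk (by omega), if_pos hbn, if_neg hbn']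
      omega
    · rw [binVal_congr fun k hk hkn => (habove k hk (by omega)).symm, if_pos hb', if_neg hb]

lemma binVal_eq_add_one_mod
    (hwrap : (∀ k, 1 ≤ k → k ≤ n → b k) → ∀ k, 1 ≤ k → k ≤ n → ¬ b' k)
    (hcarry : ∀ l, 1 ≤ l → l ≤ n → ¬ b l → (∀ k, l < k → k ≤ n → b k) →
      (∀ k, l < k → k ≤ n → ¬ b' k) ∧ b' l ∧ ∀ k, 1 ≤ k → k < l → (b k ↔ b' k)) :
    binVal n b' = (binVal n b + 1) % 2 ^ n := by
  by_cases hall : ∀ k, 1 ≤ k → k ≤ n → b k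
  · rw [binVal_eq_zero (hwrap hall), binVal_eq_two_pow_sub_one hall,
      Nat.sub_add_cancel Nat.one_le_two_pow, Nat.mod_self]
  obtain ⟨k₀, hk₀, hk₀n, hbk₀⟩ : ∃ k, 1 ≤ k ∧ k ≤ n ∧ ¬ b k := by push Not at hall; exact hall
  -- the least significant `0` bit
  set l := Nat.findGreatest (fun k => 1 ≤ k ∧ ¬ b k) n
  obtain ⟨hl, hbl⟩ : 1 ≤ l ∧ ¬ b l :=
    Nat.findGreatest_spec (P := fun k => 1 ≤ k ∧ ¬ b k) hk₀n ⟨hk₀, hbk₀⟩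
  have hln : l ≤ n := Nat.findGreatest_le n
  have hbelow : ∀ k, l < k → k ≤ n → b k := fun k hlk hkn => by
    by_contra hbk
    exact Nat.findGreatest_is_greatest hlk hkn ⟨by omega, hbk⟩
  obtain ⟨hbelow', hbl', habove⟩ := hcarry l hl hln hbl hbelow
  have hsucc := binVal_eq_add_one hl hln hbl hbl'
    (fun k hlk hkn => ⟨hbelow k hlk hkn, hbelow' k hlk hkn⟩) habove
  rw [← hsucc, Nat.mod_eq_of_lt binVal_lt_two_pow]

end BinaryValue

lemma eq_sub_mod_of_succ {f : ℕ → ℕ} {i N : ℕ} (h₀ : f i = 0)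
    (hsucc : ∀ j, i ≤ j → f (j + 1) = (f j + 1) % N) {j : ℕ} (hj : i ≤ j) :
    f j = (j - i) % N := by
  induction j, hj using Nat.le_induction with
  | base => simp [h₀]
  | succ j hj ih => rw [hsucc j hj, ih, Nat.mod_add_mod, Nat.sub_add_comm hj]

theorem stmt14_general (n : ℕ) (pv : ℕ → ℕ)
    (σ : Trace) (i : ℕ) (h : TSat (CnL n pv) σ i) :
    cvalL n pv σ i = 0 ∧ ∀ j, i ≤ j → cvalL n pv σ j = (j - i) % 2 ^ n := by
  obtain ⟨hinit, hwrap, hcarry⟩ := tsat_CnL.1 h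
  -- `cvalL n pv σ j` unfolds to `binVal n (fun k => pv k ∈ σ j)`.
  have hstep : ∀ j, i ≤ j → cvalL n pv σ (j + 1) = (cvalL n pv σ j + 1) % 2 ^ n :=
    fun j hj => binVal_eq_add_one_mod (hwrap j hj) fun l hl hln => hcarry l hl hln j hj
  have hzero : cvalL n pv σ i = 0 := binVal_eq_zero hinit
  exact ⟨hzero, fun j hj => eq_sub_mod_of_succ hzero hstep hj⟩

/-- If `σ, i ⊨ C_n`, then `σ, i ⊨ C=0` and, for every
`j ≥ i`, `σ, j ⊨ C=m` where `m` is the unique element of `{0,…,2ⁿ−1}` with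
`m ≡ j − i (mod 2ⁿ)`. -/
theorem stmt14 (n : ℕ) (hn : 1 ≤ n) (pv : ℕ → ℕ)
    (hinj : ∀ i ∈ Finset.Icc 1 n, ∀ j ∈ Finset.Icc 1 n, pv i = pv j → i = j)
    (σ : Trace) (i : ℕ) (h : TSat (CnL n pv) σ i) :
    cvalL n pv σ i = 0 ∧ ∀ j, i ≤ j → cvalL n pv σ j = (j - i) % 2 ^ n :=
  stmt14_general n pv σ i h
end
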